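/- arXiv:2604.12853 — 3 statements merged into one kernel-verified Lean document; each statement's English description precedes it below -/
import Mathlib

section
/- In the standing setup, suppose additionally that f is a strong lumping of P_X to P_Z. Then R is a row-stochastic matrix on Δ; consequently φ_m ≡ 1 for all m, φ ≡ 1, Δ' = Δ, and P = R. Moreover the projection proj²: Δ → B, (a,b) ↦ b, is a strong lumping of P to P_Y. -/
open MeasureTheory Filter Topology
open scoped ENNReal Classical

/-- A probability vector on a countable state space. -/
def IsProbVec {U : Type*} (v : U → ℝ≥0∞) : Prop := ∑' u, v u = 1

/-- A row-stochastic matrix on a countable state space. -/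
def IsStochastic {U : Type*} (P : U → U → ℝ≥0∞) : Prop := ∀ u, ∑' w, P u w = 1

/-- `μ` is the law of the time-homogeneous Markov chain `MC(v,P)`. -/
def IsMarkovChain {U : Type*} [MeasurableSpace U]
    (v : U → ℝ≥0∞) (P : U → U → ℝ≥0∞) (μ : Measure (ℕ → U)) : Prop :=
  IsProbabilityMeasure μ ∧ IsProbVec v ∧ IsStochastic P ∧
    ∀ (k : ℕ) (a : ℕ → U),
      μ {ω | ∀ i ≤ k, ω i = a i} = v (a 0) * ∏ i ∈ Finset.range k, P (a i) (a (i + 1))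

/-- `Δ(f,g) = {(a,b) : f a = g b}`. -/
abbrev Delta {A B C : Type*} (f : A → C) (g : B → C) :=
  {p : A × B // f p.1 = g p.2}

/-- The matrix `R` on `Δ(f,g)`:
`R((a,b),(a',b')) = P_X(a,a') * P_Y(b,b') / P_Z(f a, f a')` when `P_Z(f a, f a') > 0`,
else `0`. -/
noncomputable def Rmat {A B C : Type*} (PX : A → A → ℝ≥0∞) (PY : B → B → ℝ≥0∞)
    (PZ : C → C → ℝ≥0∞) (f : A → C) (g : B → C) (d e : Delta f g) : ℝ≥0∞ :=
  if PZ (f d.1.1) (f e.1.1) ≠ 0 then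
    PX d.1.1 e.1.1 * PY d.1.2 e.1.2 / PZ (f d.1.1) (f e.1.1)
  else 0

/-- `phim R m = R^m 1`, computed coordinatewise in `[0,∞]`. -/
noncomputable def phim {D : Type*} (R : D → D → ℝ≥0∞) : ℕ → D → ℝ≥0∞
  | 0 => fun _ => 1
  | m + 1 => fun d => ∑' e, R d e * phim R m e

/-!
A transition `b → b'` of `Ȳ` that is ever taken must be visible in `Z̄ = g(Ȳ)`, so
`P_Z(g b, g b') = 0` forces `P_Y(b,b') = 0`. Hence, for every `b'`, the entries of `R` from
`(a,b)` into the fibre `{(a',b') : f a' = g b'}` are `P_X(a,a') · (P_Y(b,b') / P_Z(f a, g b'))`,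
and Dynkin's criterion sums the `P_X(a,a')` to `P_Z(f a, g b')`, leaving `P_Y(b,b')`.
This is the lumping of `R` under `proj²`; summing over `b'` shows that `R` is stochastic,
so `R^m 1 = 1`, `φ = 1` and `P = R`.
-/

section MarkovChain

variable {U : Type*} [MeasurableSpace U]

lemma exists_mem_measure_cylinder_ne_zero [Countable U] {μ : Measure (ℕ → U)}
    {s : Set (ℕ → U)} (hs : μ s ≠ 0) (t : ℕ) :
    ∃ ω ∈ s, μ {ω' | ∀ i ≤ t, ω' i = ω i} ≠ 0 := by
  by_contra! h
  have hcover : s ⊆ ⋃ v : Fin (t + 1) → U, {ω ∈ s | ∀ i : Fin (t + 1), ω i = v i} :=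
    fun ω hω => Set.mem_iUnion.2 ⟨fun i => ω i, hω, fun _ => rfl⟩
  refine hs (measure_mono_null hcover (measure_iUnion_null fun v => ?_))
  rcases Set.eq_empty_or_nonempty {ω ∈ s | ∀ i : Fin (t + 1), ω i = v i} with
    hempty | ⟨ω, hωs, hωv⟩
  · simp [hempty]
  · refine measure_mono_null ?_ (h ω hωs)
    intro ω' hω' i hi
    exact (hω'.2 ⟨i, by omega⟩).trans (hωv ⟨i, by omega⟩).symm

variable {v : U → ℝ≥0∞} {P : U → U → ℝ≥0∞} {μ : Measure (ℕ → U)}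

lemma IsMarkovChain.measure_cylinder_succ (hμ : IsMarkovChain v P μ) (t : ℕ) (a : ℕ → U) :
    μ {ω | ∀ i ≤ t + 1, ω i = a i} = μ {ω | ∀ i ≤ t, ω i = a i} * P (a t) (a (t + 1)) := by
  rw [hμ.2.2.2, hμ.2.2.2, Finset.prod_range_succ, mul_assoc]

lemma IsMarkovChain.eq_zero_of_map_eq_zero [Countable U] {V : Type*} [MeasurableSpace V]
    {w : V → ℝ≥0∞} {Q : V → V → ℝ≥0∞} {ν : Measure (ℕ → V)} {g : U → V}
    (hμ : IsMarkovChain v P μ) (hν : IsMarkovChain w Q ν)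
    (hmap : μ.map (fun ω n => g (ω n)) = ν) {u u' : U} (hu : ∃ t, μ {ω | ω t = u} ≠ 0)
    (hQ : Q (g u) (g u') = 0) : P u u' = 0 := by
  by_contra hP
  obtain ⟨t, ht⟩ := hu
  obtain ⟨ω, hωt, hω⟩ := exists_mem_measure_cylinder_ne_zero ht t
  set a := Function.update ω (t + 1) u'
  have hat : a t = u := by simpa [a] using hωt
  have hat1 : a (t + 1) = u' := Function.update_self _ _ _
  have hcyl : {ω' : ℕ → U | ∀ i ≤ t, ω' i = a i} = {ω' | ∀ i ≤ t, ω' i = ω i} := by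
    ext ω'
    refine forall₂_congr fun i hi => ?_
    rw [show a i = ω i from Function.update_of_ne (by omega) _ _]
  have hpos : μ {ω' | ∀ i ≤ t + 1, ω' i = a i} ≠ 0 := by
    rw [hμ.measure_cylinder_succ, hcyl, hat, hat1]
    exact mul_ne_zero hω hP
  have hnull : ν {ω' | ∀ i ≤ t + 1, ω' i = g (a i)} = 0 := by
    rw [hν.measure_cylinder_succ, hat, hat1, hQ, mul_zero]
  -- `Measure.map` along a map that is not a.e.-measurable is `0`, whereas `ν` is a probability.
  have hg : AEMeasurable (fun ω n => g (ω n)) μ :=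
    AEMeasurable.of_map_ne_zero (hmap ▸ hν.1.ne_zero)
  have hsub : {ω' : ℕ → U | ∀ i ≤ t + 1, ω' i = a i} ⊆
      (fun ω n => g (ω n)) ⁻¹' {ω' | ∀ i ≤ t + 1, ω' i = g (a i)} :=
    fun ω' hω' i hi => by simp [hω' i hi]
  exact hpos (measure_mono_null hsub
    (le_zero_iff.1 ((Measure.le_map_apply hg _).trans (hmap ▸ hnull.le))))

end MarkovChain

lemma IsStochastic.ne_top {U : Type*} {P : U → U → ℝ≥0∞} (hP : IsStochastic P) (u w : U) :
    P u w ≠ ∞ :=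
  ne_top_of_le_ne_top ENNReal.one_ne_top ((ENNReal.le_tsum w).trans_eq (hP u))

lemma phim_eq_one {D : Type*} {R : D → D → ℝ≥0∞} (hR : IsStochastic R) :
    ∀ m d, phim R m d = 1
  | 0, _ => rfl
  | m + 1, d => by simp only [phim, phim_eq_one hR m, mul_one]; exact hR d

section Delta

variable {A B C : Type*} {PX : A → A → ℝ≥0∞} {PY : B → B → ℝ≥0∞} {PZ : C → C → ℝ≥0∞}
  {f : A → C} {g : B → C}

def Delta.sndFiberEquiv (f : A → C) (g : B → C) (b' : B) :
    {e : Delta f g // e.1.2 = b'} ≃ {x : A // f x = g b'} where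
  toFun e := ⟨e.1.1.1, e.1.2.trans (congrArg g e.2)⟩
  invFun a' := ⟨⟨(a'.1, b'), a'.2⟩, rfl⟩
  left_inv := by rintro ⟨⟨⟨x, y⟩, hxy⟩, rfl⟩; rfl
  right_inv _ := rfl

-- Where `P_Z` vanishes, `hzero` makes the right-hand side `P_X · (0 / 0) = 0`, as `Rmat` is.
lemma Rmat_eq_mul_div (hzero : ∀ b b', PZ (g b) (g b') = 0 → PY b b' = 0) (d e : Delta f g) :
    Rmat PX PY PZ f g d e = PX d.1.1 e.1.1 * (PY d.1.2 e.1.2 / PZ (g d.1.2) (g e.1.2)) := by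
  obtain ⟨⟨a, b⟩, hd : f a = g b⟩ := d
  obtain ⟨⟨a', b'⟩, he : f a' = g b'⟩ := e
  by_cases h : PZ (g b) (g b') = 0
  · simp [Rmat, hd, he, h, hzero b b' h]
  · simp [Rmat, hd, he, h, mul_div_assoc]

lemma tsum_Rmat_sndFiber (hPZ : IsStochastic PZ)
    (hDynkin : ∀ (a : A) (c' : C), ∑' a' : {x : A // f x = c'}, PX a a'.1 = PZ (f a) c')
    (hzero : ∀ b b', PZ (g b) (g b') = 0 → PY b b' = 0) (d : Delta f g) (b' : B) :
    ∑' e : {e : Delta f g // e.1.2 = b'}, Rmat PX PY PZ f g d e.1 = PY d.1.2 b' := by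
  rw [← (Delta.sndFiberEquiv f g b').symm.tsum_eq]
  simp only [Rmat_eq_mul_div hzero]
  change ∑' a' : {x : A // f x = g b'}, PX d.1.1 a'.1 * (PY d.1.2 b' / PZ (g d.1.2) (g b')) = _
  rw [ENNReal.tsum_mul_right, hDynkin, d.2]
  exact ENNReal.mul_div_cancel' (hzero _ _) fun h => absurd h (hPZ.ne_top _ _)

lemma isStochastic_Rmat (hPY : IsStochastic PY) (hPZ : IsStochastic PZ)
    (hDynkin : ∀ (a : A) (c' : C), ∑' a' : {x : A // f x = c'}, PX a a'.1 = PZ (f a) c')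
    (hzero : ∀ b b', PZ (g b) (g b') = 0 → PY b b' = 0) :
    IsStochastic (Rmat PX PY PZ f g) := fun d => by
  rw [← (Equiv.sigmaFiberEquiv fun e : Delta f g => e.1.2).tsum_eq, ENNReal.tsum_sigma']
  exact (tsum_congr (tsum_Rmat_sndFiber hPZ hDynkin hzero d)).trans (hPY _)

end Delta

theorem statement_5_general
    {A B C : Type*} [Countable B]
    [MeasurableSpace B]
    [MeasurableSpace C]
    (PX : A → A → ℝ≥0∞)
    (αY : B → ℝ≥0∞) (PY : B → B → ℝ≥0∞) (μY : Measure (ℕ → B))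
    (αZ : C → ℝ≥0∞) (PZ : C → C → ℝ≥0∞) (μZ : Measure (ℕ → C))
    (f : A → C) (g : B → C)
    (hY : IsMarkovChain αY PY μY)
    (hZ : IsMarkovChain αZ PZ μZ)
    (hgY : μY.map (fun ω n => g (ω n)) = μZ)
    (hBvis : ∀ b : B, ∃ t : ℕ, μY {ω | ω t = b} ≠ 0)
    (hDynkin : ∀ (a : A) (c' : C), ∑' a' : {x : A // f x = c'}, PX a a'.1 = PZ (f a) c')
    (φ : Delta f g → ℝ≥0∞)
    (hφ : ∀ d : Delta f g,
      Tendsto (fun m => phim (Rmat PX PY PZ f g) m d) atTop (𝓝 (φ d))) :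
    (∀ d : Delta f g, ∑' e : Delta f g, Rmat PX PY PZ f g d e = 1) ∧
    (∀ (m : ℕ) (d : Delta f g), phim (Rmat PX PY PZ f g) m d = 1) ∧
    (∀ d : Delta f g, φ d = 1) ∧
    (∀ d : Delta f g, φ d ≠ 0) ∧
    (∀ d e : Delta f g, Rmat PX PY PZ f g d e * φ e / φ d = Rmat PX PY PZ f g d e) ∧
    (∀ (d : Delta f g) (b' : B),
      ∑' e : {e : Delta f g // e.1.2 = b'},
        Rmat PX PY PZ f g d e.1 * φ e.1 / φ d = PY d.1.2 b') := by
  have hzero : ∀ b b', PZ (g b) (g b') = 0 → PY b b' = 0 := fun b _ =>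
    hY.eq_zero_of_map_eq_zero hZ hgY (hBvis b)
  have hR := isStochastic_Rmat hY.2.2.1 hZ.2.2.1 hDynkin hzero
  have hφ1 : ∀ d, φ d = 1 := fun d =>
    tendsto_nhds_unique (hφ d) (by simp only [phim_eq_one hR]; exact tendsto_const_nhds)
  refine ⟨hR, phim_eq_one hR, hφ1, fun d => by simp [hφ1], fun d e => by simp [hφ1],
    fun d b' => ?_⟩
  simpa only [hφ1, mul_one, div_one] using tsum_Rmat_sndFiber hZ.2.2.1 hDynkin hzero d b'

/-- **Strong lumping case (Proposition `g strong proj1 strong`).** If `f` is a strong lumping of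
`P_X` to `P_Z` (Dynkin's criterion), then `R` is row-stochastic; consequently `φ_m ≡ 1` for all
`m`, `φ ≡ 1`, `Δ' = Δ`, and `P = R`. Moreover the projection `proj² : Δ → B` is a strong
lumping of `P` to `P_Y` (again via Dynkin's criterion). -/
theorem statement_5
    {A B C : Type*} [Countable A] [Countable B] [Countable C]
    [MeasurableSpace A] [MeasurableSingletonClass A]
    [MeasurableSpace B] [MeasurableSingletonClass B]
    [MeasurableSpace C] [MeasurableSingletonClass C]
    (αX : A → ℝ≥0∞) (PX : A → A → ℝ≥0∞) (μX : Measure (ℕ → A))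
    (αY : B → ℝ≥0∞) (PY : B → B → ℝ≥0∞) (μY : Measure (ℕ → B))
    (αZ : C → ℝ≥0∞) (PZ : C → C → ℝ≥0∞) (μZ : Measure (ℕ → C))
    (f : A → C) (g : B → C)
    (hX : IsMarkovChain αX PX μX) (hY : IsMarkovChain αY PY μY)
    (hZ : IsMarkovChain αZ PZ μZ)
    (hfX : μX.map (fun ω n => f (ω n)) = μZ)
    (hgY : μY.map (fun ω n => g (ω n)) = μZ)
    (hAvis : ∀ a : A, ∃ t : ℕ, μX {ω | ω t = a} ≠ 0)
    (hBvis : ∀ b : B, ∃ t : ℕ, μY {ω | ω t = b} ≠ 0)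
    (hDynkin : ∀ (a : A) (c' : C), ∑' a' : {x : A // f x = c'}, PX a a'.1 = PZ (f a) c')
    (φ : Delta f g → ℝ≥0∞)
    (hφ : ∀ d : Delta f g,
      Tendsto (fun m => phim (Rmat PX PY PZ f g) m d) atTop (𝓝 (φ d))) :
    (∀ d : Delta f g, ∑' e : Delta f g, Rmat PX PY PZ f g d e = 1) ∧
    (∀ (m : ℕ) (d : Delta f g), phim (Rmat PX PY PZ f g) m d = 1) ∧
    (∀ d : Delta f g, φ d = 1) ∧
    (∀ d : Delta f g, φ d ≠ 0) ∧
    (∀ d e : Delta f g, Rmat PX PY PZ f g d e * φ e / φ d = Rmat PX PY PZ f g d e) ∧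
    (∀ (d : Delta f g) (b' : B),
      ∑' e : {e : Delta f g // e.1.2 = b'},
        Rmat PX PY PZ f g d e.1 * φ e.1 / φ d = PY d.1.2 b') :=
  statement_5_general PX αY PY μY αZ PZ μZ f g hY hZ hgY hBvis hDynkin φ hφ
end

section
/- In the standing setup, suppose additionally that f is an exact lumping of MC(α_X,P_X) to MC(α_Z,P_Z) with respect to a family (ν_c)_{c∈C}. Then the projection proj²: Δ' → B, (a,b) ↦ b, is an exact lumping of MC(α,P) to MC(α_Y,P_Y); explicitly, the family (μ_y)_{y∈B} defined by μ_y(a,b) = ν_{g(b)}(a)·φ(a,b) if b = y and 0 otherwise satisfies the exact lumping equation for P and P_Y, and α = Σ_{y∈B} α_Y(y) μ_y. -/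
/-!
Write `φ_m = R^m 1` as a sum over words `w ∈ C^m`: `φ_m(a,b)` is the sum of
`P_a(f(X) spells w) · P_b(g(Y) spells w) / P_{f a}(Z spells w)`. Exact lumping turns the
`ν`-average of the first factor into `P(Z spells w)`, so
`Σ_a ν(a) φ_m(a,b) = Σ_w P_b(g(Y) spells w) = 1` for every `m`. If `b` is visited at time `t` with
probability `p > 0`, then, `g(Y)` having the law of `Z`, `p · P_b(g(Y) spells w) ≤ P(Z spells w)`;
hence `φ_m ≤ 1/p`, and dominated convergence carries the identity over to `φ`. The lumping
equation for `P` then reduces to that of `ν`, the zeros of `φ` being harmless because `Rφ ≤ φ`,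
and `α` factorises because `α_X = α_Z(f ·) ν_{f ·}`.
-/

open MeasureTheory Filter Topology
open scoped ENNReal Classical

/-- The initial distribution `α` of the coupled chain on `Δ'`:
`α(a,b) = (α_X(a) * α_Y(b) / α_Z(c)) * φ(a,b)` when `α_Z(c) > 0`, and `0` otherwise. -/
noncomputable def alphaW {A B C : Type*} (αX : A → ℝ≥0∞) (αY : B → ℝ≥0∞) (αZ : C → ℝ≥0∞)
    (f : A → C) (g : B → C) (φ : Delta f g → ℝ≥0∞) (d : Delta f g) : ℝ≥0∞ :=
  if αZ (f d.1.1) ≠ 0 then αX d.1.1 * αY d.1.2 / αZ (f d.1.1) * φ d else 0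


namespace ENNReal

variable {ι : Type*}

lemma tsum_le_of_tendsto {F : ℕ → ι → ℝ≥0∞} {f : ι → ℝ≥0∞} {s : ℝ≥0∞}
    (hF : ∀ i, Tendsto (F · i) atTop (𝓝 (f i)))
    (hs : Tendsto (fun n => ∑' i, F n i) atTop (𝓝 s)) : ∑' i, f i ≤ s := by
  rw [ENNReal.tsum_eq_iSup_sum]
  refine iSup_le fun t => le_of_tendsto_of_tendsto' (tendsto_finsetSum t fun i _ => hF i) hs
    fun n => ENNReal.sum_le_tsum t

lemma tendsto_tsum_of_dominated {F : ℕ → ι → ℝ≥0∞} {f bound : ι → ℝ≥0∞}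
    (h_bound : ∀ n i, F n i ≤ bound i) (h_fin : ∑' i, bound i ≠ ∞)
    (h_lim : ∀ i, Tendsto (F · i) atTop (𝓝 (f i))) :
    Tendsto (fun n => ∑' i, F n i) atTop (𝓝 (∑' i, f i)) := by
  let : MeasurableSpace ι := ⊤
  simp only [← lintegral_count] at h_fin ⊢
  exact tendsto_lintegral_of_dominated_convergence bound (fun _ => .of_discrete)
    (fun n => .of_forall (h_bound n)) h_fin (.of_forall h_lim)

end ENNReal

lemma tsum_fin_succ_fun {C : Type*} {m : ℕ} (F : (Fin (m + 1) → C) → ℝ≥0∞) :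
    ∑' w, F w = ∑' c, ∑' w : Fin m → C, F (Fin.cons c w) := by
  rw [← (Fin.consEquiv fun _ => C).tsum_eq, ENNReal.tsum_prod']
  rfl

lemma tsum_fiber_eq_tsum {U C : Type*} {h : U → C} {c : C} {F : U → ℝ≥0∞}
    (hF : ∀ u, h u ≠ c → F u = 0) : ∑' u : {u // h u = c}, F u = ∑' u, F u :=
  tsum_subtype_eq_of_support_subset fun u hu => by_contra fun hc => hu (hF u hc)

def deltaEquivSigma {A B C : Type*} (f : A → C) (g : B → C) :
    (Σ c : C, {a // f a = c} × {b // g b = c}) ≃ Delta f g where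
  toFun p := ⟨(p.2.1, p.2.2), p.2.1.2.trans p.2.2.2.symm⟩
  invFun d := ⟨g d.1.2, ⟨d.1.1, d.2⟩, ⟨d.1.2, rfl⟩⟩
  left_inv := by rintro ⟨c, ⟨a, ha⟩, ⟨b, rfl⟩⟩; rfl
  right_inv _ := rfl

lemma tsum_delta {A B C : Type*} {f : A → C} {g : B → C} (F : Delta f g → ℝ≥0∞) :
    ∑' d, F d = ∑' c, ∑' a : {a // f a = c}, ∑' b : {b // g b = c},
      F ⟨(a, b), a.2.trans b.2.symm⟩ := by
  rw [← (deltaEquivSigma f g).tsum_eq, ENNReal.tsum_sigma']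
  simp_rw [ENNReal.tsum_prod']
  rfl

section PathProb

variable {U C : Type*}

lemma IsStochastic.apply_le_one {P : U → U → ℝ≥0∞} (hP : IsStochastic P) (u u' : U) :
    P u u' ≤ 1 :=
  (ENNReal.le_tsum u').trans_eq (hP u)

lemma IsStochastic.apply_ne_top {P : U → U → ℝ≥0∞} (hP : IsStochastic P) (u u' : U) :
    P u u' ≠ ∞ :=
  ne_top_of_le_ne_top ENNReal.one_ne_top (hP.apply_le_one u u')

noncomputable def pathProb (P : C → C → ℝ≥0∞) : (m : ℕ) → C → (Fin m → C) → ℝ≥0∞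
  | 0, _, _ => 1
  | m + 1, c, w => P c (w 0) * pathProb P m (w 0) (Fin.tail w)

/-- The probability that the chain with kernel `P` started at `u` shows `h`-image `w i` at time
`i + 1` for every `i < m`. -/
noncomputable def imagePathProb (P : U → U → ℝ≥0∞) (h : U → C) :
    (m : ℕ) → U → (Fin m → C) → ℝ≥0∞
  | 0, _, _ => 1
  | m + 1, u, w => ∑' u' : {u' // h u' = w 0}, P u u' * imagePathProb P h m u' (Fin.tail w)

@[simp]
lemma pathProb_zero (P : C → C → ℝ≥0∞) (c : C) (w : Fin 0 → C) : pathProb P 0 c w = 1 := rfl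

lemma pathProb_succ_cons (P : C → C → ℝ≥0∞) (m : ℕ) (c c' : C) (w : Fin m → C) :
    pathProb P (m + 1) c (Fin.cons c' w) = P c c' * pathProb P m c' w := rfl

@[simp]
lemma imagePathProb_zero (P : U → U → ℝ≥0∞) (h : U → C) (u : U) (w : Fin 0 → C) :
    imagePathProb P h 0 u w = 1 := rfl

lemma imagePathProb_succ_cons (P : U → U → ℝ≥0∞) (h : U → C) (m : ℕ) (u : U) (c : C)
    (w : Fin m → C) :
    imagePathProb P h (m + 1) u (Fin.cons c w)
      = ∑' u' : {u' // h u' = c}, P u u' * imagePathProb P h m u' w := rfl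

lemma imagePathProb_id (P : C → C → ℝ≥0∞) :
    ∀ (m : ℕ) (c : C) (w : Fin m → C), imagePathProb P id m c w = pathProb P m c w
  | 0, _, _ => rfl
  | m + 1, c, w => by
    rw [imagePathProb, pathProb, tsum_eq_single (⟨w 0, rfl⟩ : {u' // id u' = w 0})
      fun u hu => (hu (Subtype.ext u.2)).elim, imagePathProb_id P m]

lemma tsum_imagePathProb {P : U → U → ℝ≥0∞} (hP : IsStochastic P) (h : U → C) :
    ∀ (m : ℕ) (u : U), ∑' w, imagePathProb P h m u w = 1
  | 0, _ => by simp
  | m + 1, u => by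
    simp_rw [tsum_fin_succ_fun, imagePathProb_succ_cons]
    rw [← hP u, ← ENNReal.tsum_fiberwise _ h]
    refine tsum_congr fun c => ?_
    rw [ENNReal.tsum_comm]
    simp_rw [ENNReal.tsum_mul_left, tsum_imagePathProb hP h m, mul_one]
    rfl

lemma pathProb_le_one {P : C → C → ℝ≥0∞} (hP : IsStochastic P) :
    ∀ (m : ℕ) (c : C) (w : Fin m → C), pathProb P m c w ≤ 1
  | 0, _, _ => le_rfl
  | m + 1, _, _ =>
    mul_le_one' (hP.apply_le_one _ _) (pathProb_le_one hP m _ _)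

end PathProb

structure IsExactLumping {A C : Type*} (PX : A → A → ℝ≥0∞) (PZ : C → C → ℝ≥0∞) (f : A → C)
    (ν : C → A → ℝ≥0∞) : Prop where
  eq_zero_of_ne : ∀ c a, f a ≠ c → ν c a = 0
  tsum_eq_one : ∀ c, ∑' a, ν c a = 1
  tsum_mul_eq : ∀ c c' a', f a' = c' →
    ∑' a : {x // f x = c}, ν c a.1 * PX a.1 a' = PZ c c' * ν c' a'

namespace IsExactLumping

variable {A C : Type*} {PX : A → A → ℝ≥0∞} {PZ : C → C → ℝ≥0∞} {f : A → C} {ν : C → A → ℝ≥0∞}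

lemma tsum_fiber_eq_one (hν : IsExactLumping PX PZ f ν) (c : C) :
    ∑' a : {a // f a = c}, ν c a = 1 :=
  (tsum_fiber_eq_tsum (hν.eq_zero_of_ne c)).trans (hν.tsum_eq_one c)

lemma ne_top (hν : IsExactLumping PX PZ f ν) (c : C) (a : A) : ν c a ≠ ∞ :=
  ne_top_of_le_ne_top ENNReal.one_ne_top ((ENNReal.le_tsum a).trans_eq (hν.tsum_eq_one c))

lemma tsum_mul_imagePathProb (hν : IsExactLumping PX PZ f ν) :
    ∀ (m : ℕ) (c : C) (w : Fin m → C),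
      ∑' a : {a // f a = c}, ν c a * imagePathProb PX f m a w = pathProb PZ m c w
  | 0, c, _ => by simpa using hν.tsum_fiber_eq_one c
  | m + 1, c, w => by
    simp_rw [imagePathProb, pathProb, ← ENNReal.tsum_mul_left]
    rw [ENNReal.tsum_comm, ← hν.tsum_mul_imagePathProb m (w 0), ← ENNReal.tsum_mul_left]
    refine tsum_congr fun a' => ?_
    simp_rw [← mul_assoc]
    rw [ENNReal.tsum_mul_right, hν.tsum_mul_eq c (w 0) a' a'.2, mul_assoc]

end IsExactLumping

section Coupling

variable {A B C : Type*} (PX : A → A → ℝ≥0∞) (PY : B → B → ℝ≥0∞) (PZ : C → C → ℝ≥0∞)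
  (f : A → C) (g : B → C)

noncomputable def pathRatio (m : ℕ) (b : B) (w : Fin m → C) : ℝ≥0∞ :=
  if pathProb PZ m (g b) w ≠ 0 then imagePathProb PY g m b w / pathProb PZ m (g b) w else 0

variable {PX PY PZ f g}

lemma Rmat_apply (d e : Delta f g) :
    Rmat PX PY PZ f g d e = if PZ (g d.1.2) (g e.1.2) ≠ 0
      then PX d.1.1 e.1.1 * PY d.1.2 e.1.2 / PZ (g d.1.2) (g e.1.2) else 0 := by
  simp only [Rmat, d.2, e.2]

lemma imagePathProb_mul_pathRatio_succ_cons (d : Delta f g) (m : ℕ) (c' : C) (w : Fin m → C) :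
    imagePathProb PX f (m + 1) d.1.1 (Fin.cons c' w)
        * pathRatio PY PZ g (m + 1) d.1.2 (Fin.cons c' w)
      = ∑' a' : {a' // f a' = c'}, ∑' b' : {b' // g b' = c'},
          Rmat PX PY PZ f g d ⟨(a', b'), a'.2.trans b'.2.symm⟩
            * (imagePathProb PX f m a' w * pathRatio PY PZ g m b' w) := by
  have hR : ∀ (a' : {a' // f a' = c'}) (b' : {b' // g b' = c'}),
      Rmat PX PY PZ f g d ⟨(a', b'), a'.2.trans b'.2.symm⟩
        = if PZ (g d.1.2) c' ≠ 0 then PX d.1.1 a' * PY d.1.2 b' / PZ (g d.1.2) c' else 0 :=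
    fun a' b' => by simp only [Rmat_apply, b'.2]
  have hρ : ∀ b' : {b' // g b' = c'}, pathRatio PY PZ g m b' w
      = if pathProb PZ m c' w ≠ 0 then imagePathProb PY g m b' w / pathProb PZ m c' w else 0 :=
    fun b' => by rw [pathRatio, b'.2]
  simp only [hR, hρ]
  rw [pathRatio, pathProb_succ_cons, imagePathProb_succ_cons, imagePathProb_succ_cons]
  set p := PZ (g d.1.2) c'
  set z := pathProb PZ m c' w
  by_cases hp : p = 0
  · simp [hp]
  by_cases hz : z = 0
  · simp [hz]
  have hdiv : ∀ x y : ℝ≥0∞, x * (y / (p * z)) = x * y * (p⁻¹ * z⁻¹) := fun x y => by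
    rw [div_eq_mul_inv, ENNReal.mul_inv (.inl hp) (.inr hz), mul_assoc]
  simp only [ne_eq, mul_eq_zero, hp, hz, or_self, not_false_eq_true, if_true, hdiv]
  rw [← ENNReal.tsum_mul_right, ← ENNReal.tsum_mul_right]
  refine tsum_congr fun a' => ?_
  rw [← ENNReal.tsum_mul_left, ← ENNReal.tsum_mul_right]
  refine tsum_congr fun b' => ?_
  simp only [div_eq_mul_inv]
  ring

lemma phim_eq_tsum_imagePathProb_mul_pathRatio :
    ∀ (m : ℕ) (d : Delta f g), phim (Rmat PX PY PZ f g) m d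
      = ∑' w, imagePathProb PX f m d.1.1 w * pathRatio PY PZ g m d.1.2 w
  | 0, d => by simp [phim, pathRatio, tsum_fintype]
  | m + 1, d => by
    simp_rw [phim, phim_eq_tsum_imagePathProb_mul_pathRatio m, ← ENNReal.tsum_mul_left]
    rw [ENNReal.tsum_comm, tsum_fin_succ_fun, ENNReal.tsum_comm (α := C)]
    simp_rw [tsum_delta, imagePathProb_mul_pathRatio_succ_cons]

end Coupling

section Domination

variable {A B C : Type*} {PX : A → A → ℝ≥0∞} {PY : B → B → ℝ≥0∞} {PZ : C → C → ℝ≥0∞}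
  {f : A → C} {g : B → C} {y : B} {p : ℝ≥0∞}

lemma pathRatio_le_inv (hp : p ≠ 0) (hp_top : p ≠ ∞)
    (hdom : ∀ m w, p * imagePathProb PY g m y w ≤ pathProb PZ m (g y) w) (m : ℕ)
    (w : Fin m → C) : pathRatio PY PZ g m y w ≤ p⁻¹ := by
  rw [pathRatio]
  split_ifs
  · exact ENNReal.div_le_of_le_mul (mul_comm p⁻¹ _ ▸ (ENNReal.mul_le_iff_le_inv hp hp_top).1
      (hdom m w))
  · exact zero_le

lemma pathProb_mul_pathRatio (hPZ : IsStochastic PZ) (hp : p ≠ 0)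
    (hdom : ∀ m w, p * imagePathProb PY g m y w ≤ pathProb PZ m (g y) w) (m : ℕ)
    (w : Fin m → C) :
    pathProb PZ m (g y) w * pathRatio PY PZ g m y w = imagePathProb PY g m y w := by
  rw [pathRatio]
  split_ifs with hz
  · exact ENNReal.mul_div_cancel hz
      (ne_top_of_le_ne_top ENNReal.one_ne_top (pathProb_le_one hPZ m _ w))
  · have h := hdom m w
    rw [not_ne_iff.1 hz, nonpos_iff_eq_zero, mul_eq_zero] at h
    rw [h.resolve_left hp, mul_zero]

lemma transition_eq_zero_of_lumped_eq_zero (hp : p ≠ 0)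
    (hdom : ∀ m w, p * imagePathProb PY g m y w ≤ pathProb PZ m (g y) w) {b' : B}
    (hz : PZ (g y) (g b') = 0) : PY y b' = 0 := by
  have h := hdom 1 (Fin.cons (g b') Fin.elim0)
  rw [pathProb_succ_cons, hz, zero_mul, nonpos_iff_eq_zero, mul_eq_zero,
    imagePathProb_succ_cons, ENNReal.tsum_eq_zero] at h
  simpa using h.resolve_left hp ⟨b', rfl⟩

lemma phim_le_inv (hPX : IsStochastic PX) (hp : p ≠ 0) (hp_top : p ≠ ∞)
    (hdom : ∀ m w, p * imagePathProb PY g m y w ≤ pathProb PZ m (g y) w) (m : ℕ) (a : A)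
    (ha : f a = g y) : phim (Rmat PX PY PZ f g) m ⟨(a, y), ha⟩ ≤ p⁻¹ := by
  rw [phim_eq_tsum_imagePathProb_mul_pathRatio]
  calc ∑' w, imagePathProb PX f m a w * pathRatio PY PZ g m y w
      ≤ ∑' w, imagePathProb PX f m a w * p⁻¹ :=
        ENNReal.tsum_le_tsum fun w => mul_le_mul_right (pathRatio_le_inv hp hp_top hdom m w) _
    _ = p⁻¹ := by rw [ENNReal.tsum_mul_right, tsum_imagePathProb hPX, one_mul]

lemma tsum_mul_phim_eq_one {ν : C → A → ℝ≥0∞} (hν : IsExactLumping PX PZ f ν)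
    (hPY : IsStochastic PY) (hPZ : IsStochastic PZ) (hp : p ≠ 0)
    (hdom : ∀ m w, p * imagePathProb PY g m y w ≤ pathProb PZ m (g y) w) (m : ℕ) :
    ∑' a : {a // f a = g y}, ν (g y) a * phim (Rmat PX PY PZ f g) m ⟨(a, y), a.2⟩ = 1 := by
  simp_rw [phim_eq_tsum_imagePathProb_mul_pathRatio, ← ENNReal.tsum_mul_left]
  rw [ENNReal.tsum_comm, ← tsum_imagePathProb hPY g m y]
  refine tsum_congr fun w => ?_
  simp_rw [← mul_assoc]
  rw [ENNReal.tsum_mul_right, hν.tsum_mul_imagePathProb, pathProb_mul_pathRatio hPZ hp hdom]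

end Domination

noncomputable def cylinderProb {U : Type*} (v : U → ℝ≥0∞) (P : U → U → ℝ≥0∞) (t : ℕ)
    (π : Fin (t + 1) → U) : ℝ≥0∞ :=
  v (π 0) * ∏ i : Fin t, P (π i.castSucc) (π i.succ)

lemma cylinderProb_snoc {U : Type*} (v : U → ℝ≥0∞) (P : U → U → ℝ≥0∞) (t : ℕ)
    (π : Fin (t + 1) → U) (u : U) :
    cylinderProb v P (t + 1) (Fin.snoc π u) = cylinderProb v P t π * P (π (Fin.last t)) u := by
  simp only [cylinderProb, Fin.prod_univ_castSucc, Fin.snoc_castSucc, Fin.succ_castSucc,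
    Fin.succ_last, Fin.snoc_last, mul_assoc]
  rw [show (0 : Fin (t + 2)) = Fin.castSucc 0 from rfl, Fin.snoc_castSucc]

def snocFiberEquiv {U C : Type*} {t : ℕ} (S : Set (Fin (t + 1) → U)) (h : U → C) (c : C) :
    ↥{π : Fin (t + 2) → U | Fin.init π ∈ S ∧ h (π (Fin.last (t + 1))) = c}
      ≃ S × {u // h u = c} where
  toFun π := (⟨Fin.init π.1, π.2.1⟩, ⟨π.1 (Fin.last (t + 1)), π.2.2⟩)
  invFun p := ⟨Fin.snoc p.1.1 p.2.1, ⟨by simp [p.1.2], by simp [p.2.2]⟩⟩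
  left_inv π := Subtype.ext (Fin.snoc_init_self π.1)
  right_inv p := by ext <;> simp

namespace IsMarkovChain

variable {U : Type*} [MeasurableSpace U] {v : U → ℝ≥0∞} {P : U → U → ℝ≥0∞} {μ : Measure (ℕ → U)}

lemma measurableSet_eval_eq [MeasurableSingletonClass U] (t : ℕ) (u : U) :
    MeasurableSet {ω : ℕ → U | ω t = u} :=
  (measurableSet_singleton u).preimage (measurable_pi_apply t)

lemma measure_prefix_eq (hμ : IsMarkovChain v P μ) (t : ℕ) (π : Fin (t + 1) → U) :
    μ {ω | ∀ i : Fin (t + 1), ω i = π i} = cylinderProb v P t π := by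
  have hset : {ω : ℕ → U | ∀ i : Fin (t + 1), ω i = π i}
      = {ω | ∀ i ≤ t, ω i = π (Fin.clamp i t)} := by
    ext ω
    simp only [Set.mem_ofPred_eq, Fin.forall_iff, Nat.lt_succ_iff]
    refine forall₂_congr fun i hi => ?_
    rw [show Fin.clamp i t = ⟨i, by omega⟩ from Fin.ext (min_eq_left hi)]
  rw [hset, hμ.2.2.2, cylinderProb, ← Fin.prod_univ_eq_prod_range]
  congr 1
  refine Finset.prod_congr rfl fun i _ => ?_
  congr 2 <;> ext <;> simp [Fin.clamp]

lemma measure_prefix_mem [Countable U] [MeasurableSingletonClass U] (hμ : IsMarkovChain v P μ)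
    (t : ℕ) (S : Set (Fin (t + 1) → U)) :
    μ {ω | (fun i : Fin (t + 1) => ω i) ∈ S} = ∑' π : S, cylinderProb v P t π := by
  have hset : {ω : ℕ → U | (fun i : Fin (t + 1) => ω i) ∈ S}
      = ⋃ π : S, {ω | ∀ i : Fin (t + 1), ω i = π.1 i} := by
    ext ω
    simp only [Set.mem_ofPred_eq, Set.mem_iUnion, ← funext_iff, Subtype.exists, exists_prop,
      exists_eq_right']
  have hmeas (π : S) : MeasurableSet {ω : ℕ → U | ∀ i : Fin (t + 1), ω i = π.1 i} := by
    simp only [Set.ofPred_forall]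
    exact .iInter fun i => measurableSet_eval_eq _ _
  have hdisj : Pairwise (Function.onFun Disjoint
      fun π : S => {ω : ℕ → U | ∀ i : Fin (t + 1), ω i = π.1 i}) := fun π π' hne =>
    Set.disjoint_left.2 fun ω h h' => hne (Subtype.ext (funext fun i => (h i).symm.trans (h' i)))
  rw [hset, measure_iUnion hdisj hmeas]
  exact tsum_congr fun π => hμ.measure_prefix_eq t π

lemma measure_prefix_mem_and_image [Countable U] [MeasurableSingletonClass U]
    (hμ : IsMarkovChain v P μ) {C : Type*} (h : U → C) :
    ∀ (m t : ℕ) (S : Set (Fin (t + 1) → U)) (w : Fin m → C),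
      μ {ω | (fun i : Fin (t + 1) => ω i) ∈ S ∧ ∀ i : Fin m, h (ω (t + 1 + i)) = w i}
        = ∑' π : S, cylinderProb v P t π * imagePathProb P h m (π.1 (Fin.last t)) w
  | 0, t, S, w => by simpa using hμ.measure_prefix_mem t S
  | m + 1, t, S, w => by
    set S' : Set (Fin (t + 2) → U) := {π | Fin.init π ∈ S ∧ h (π (Fin.last (t + 1))) = w 0}
    have hset : {ω : ℕ → U | (fun i : Fin (t + 1) => ω i) ∈ S
          ∧ ∀ i : Fin (m + 1), h (ω (t + 1 + i)) = w i}
        = {ω | (fun i : Fin (t + 2) => ω i) ∈ S'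
          ∧ ∀ i : Fin m, h (ω (t + 1 + 1 + i)) = Fin.tail w i} := by
      ext ω
      simp only [Set.mem_ofPred_eq, Fin.forall_fin_succ, S', Fin.tail, Fin.val_succ, and_assoc,
        Fin.val_last, Fin.val_zero, add_zero]
      refine and_congr Iff.rfl (and_congr Iff.rfl (forall_congr' fun i => ?_))
      rw [show t + 1 + (i + 1) = t + 1 + 1 + i by omega]
    rw [hset, hμ.measure_prefix_mem_and_image h m (t + 1) S',
      ← (snocFiberEquiv S h (w 0)).symm.tsum_eq, ENNReal.tsum_prod']
    refine tsum_congr fun π => ?_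
    rw [imagePathProb, ← ENNReal.tsum_mul_left]
    refine tsum_congr fun u => ?_
    simp only [snocFiberEquiv, Equiv.coe_fn_symm_mk, cylinderProb_snoc, Fin.snoc_last]
    ring

lemma measure_eval_eq_and_image [Countable U] [MeasurableSingletonClass U]
    (hμ : IsMarkovChain v P μ) {C : Type*} (h : U → C) (m t : ℕ) (u : U) (w : Fin m → C) :
    μ {ω | ω t = u ∧ ∀ i : Fin m, h (ω (t + 1 + i)) = w i}
      = μ {ω | ω t = u} * imagePathProb P h m u w := by
  have := hμ.measure_prefix_mem_and_image h m t {π | π (Fin.last t) = u} w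
  simp only [Set.mem_ofPred_eq, Fin.val_last] at this
  rw [this, tsum_congr fun π : {π : Fin (t + 1) → U | π (Fin.last t) = u} => by rw [π.2],
    ENNReal.tsum_mul_right, ← hμ.measure_prefix_mem]
  rfl

lemma measure_eval_zero (hμ : IsMarkovChain v P μ) (u : U) : μ {ω | ω 0 = u} = v u := by
  simpa using hμ.2.2.2 0 fun _ => u

lemma measure_ne_top (hμ : IsMarkovChain v P μ) (s : Set (ℕ → U)) : μ s ≠ ∞ :=
  haveI := hμ.1
  MeasureTheory.measure_ne_top μ s

end IsMarkovChain

section Lumped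

variable {U C : Type*} [Countable U] [MeasurableSpace U] [MeasurableSingletonClass U]
  [MeasurableSpace C] {μ : Measure (ℕ → U)} {μZ : Measure (ℕ → C)} {h : U → C}

lemma measurable_comp_path : Measurable fun (ω : ℕ → U) (n : ℕ) => h (ω n) :=
  measurable_pi_lambda _ fun n => Measurable.of_discrete.comp (measurable_pi_apply n)

lemma measure_eval_eq_of_map_eq [MeasurableSingletonClass C]
    (hmap : μ.map (fun ω n => h (ω n)) = μZ) (t : ℕ) (c : C) :
    μZ {ω | ω t = c} = ∑' u : {u // h u = c}, μ {ω | ω t = u} := by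
  rw [← hmap, Measure.map_apply measurable_comp_path (IsMarkovChain.measurableSet_eval_eq t c)]
  exact (tsum_measure_preimage_singleton (s := {u | h u = c}) (f := fun ω : ℕ → U => ω t)
    (Set.to_countable _) fun u _ => IsMarkovChain.measurableSet_eval_eq t u).symm

lemma measure_eval_le_of_map_eq [MeasurableSingletonClass C]
    (hmap : μ.map (fun ω n => h (ω n)) = μZ) (t : ℕ) (u : U) :
    μ {ω | ω t = u} ≤ μZ {ω | ω t = h u} := by
  rw [measure_eval_eq_of_map_eq hmap t (h u)]
  exact ENNReal.le_tsum (⟨u, rfl⟩ : {u' // h u' = h u})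

lemma exists_mul_imagePathProb_le [Countable C] [MeasurableSingletonClass C]
    {v : U → ℝ≥0∞} {P : U → U → ℝ≥0∞} {αZ : C → ℝ≥0∞} {PZ : C → C → ℝ≥0∞} (hμ : IsMarkovChain v P μ)
    (hZ : IsMarkovChain αZ PZ μZ) (hmap : μ.map (fun ω n => h (ω n)) = μZ) {u : U}
    (hvis : ∃ t, μ {ω | ω t = u} ≠ 0) :
    ∃ p : ℝ≥0∞, p ≠ 0 ∧ p ≠ ∞ ∧
      ∀ m w, p * imagePathProb P h m u w ≤ pathProb PZ m (h u) w := by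
  obtain ⟨t, ht⟩ := hvis
  refine ⟨_, ht, hμ.measure_ne_top _, fun m w => ?_⟩
  have hpre : {ω : ℕ → U | ω t = u ∧ ∀ i : Fin m, h (ω (t + 1 + i)) = w i}
      ⊆ (fun (ω : ℕ → U) n => h (ω n)) ⁻¹' {ω | ω t = h u ∧ ∀ i : Fin m, ω (t + 1 + i) = w i} :=
    fun ω hω => ⟨congrArg h hω.1, hω.2⟩
  have hZmeas : MeasurableSet {ω : ℕ → C | ω t = h u ∧ ∀ i : Fin m, ω (t + 1 + i) = w i} := by
    simp only [Set.ofPred_and, Set.ofPred_forall]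
    exact (IsMarkovChain.measurableSet_eval_eq _ _).inter
      (.iInter fun i => IsMarkovChain.measurableSet_eval_eq _ _)
  calc μ {ω | ω t = u} * imagePathProb P h m u w
      = μ {ω | ω t = u ∧ ∀ i : Fin m, h (ω (t + 1 + i)) = w i} :=
        (hμ.measure_eval_eq_and_image h m t u w).symm
    _ ≤ μZ {ω | ω t = h u ∧ ∀ i : Fin m, ω (t + 1 + i) = w i} := by
        rw [← hmap, Measure.map_apply measurable_comp_path hZmeas]
        exact measure_mono hpre
    _ = μZ {ω | ω t = h u} * pathProb PZ m (h u) w := by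
        rw [← imagePathProb_id]
        exact hZ.measure_eval_eq_and_image id m t (h u) w
    _ ≤ pathProb PZ m (h u) w := by
        have := hZ.1
        exact mul_le_of_le_one_left' prob_le_one

end Lumped

section Limit

variable {A B C : Type*} {PX : A → A → ℝ≥0∞} {PY : B → B → ℝ≥0∞} {PZ : C → C → ℝ≥0∞}
  {f : A → C} {g : B → C} {φ : Delta f g → ℝ≥0∞}

lemma Rmat_ne_top (hPX : IsStochastic PX) (hPY : IsStochastic PY) (d e : Delta f g) :
    Rmat PX PY PZ f g d e ≠ ∞ := by
  rw [Rmat]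
  split_ifs with hz
  · exact ENNReal.div_ne_top (ENNReal.mul_ne_top (hPX.apply_ne_top _ _) (hPY.apply_ne_top _ _)) hz
  · exact ENNReal.zero_ne_top

lemma tsum_Rmat_mul_le (hPX : IsStochastic PX) (hPY : IsStochastic PY)
    (hφ : ∀ d, Tendsto (fun m => phim (Rmat PX PY PZ f g) m d) atTop (𝓝 (φ d))) (d : Delta f g) :
    ∑' e, Rmat PX PY PZ f g d e * φ e ≤ φ d :=
  ENNReal.tsum_le_of_tendsto
    (fun e => ENNReal.Tendsto.const_mul (hφ e) (.inr (Rmat_ne_top hPX hPY d e)))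
    ((hφ d).comp (tendsto_add_atTop_nat 1))

end Limit

section Fiber

variable {A B C : Type*} {PX : A → A → ℝ≥0∞} {PY : B → B → ℝ≥0∞} {PZ : C → C → ℝ≥0∞}
  {f : A → C} {g : B → C} {ν : C → A → ℝ≥0∞} {φ : Delta f g → ℝ≥0∞} {y : B} {p : ℝ≥0∞}

lemma phi_le_inv (hPX : IsStochastic PX) (hp : p ≠ 0) (hp_top : p ≠ ∞)
    (hdom : ∀ m w, p * imagePathProb PY g m y w ≤ pathProb PZ m (g y) w)
    (hφ : ∀ d, Tendsto (fun m => phim (Rmat PX PY PZ f g) m d) atTop (𝓝 (φ d))) (a : A)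
    (ha : f a = g y) : φ ⟨(a, y), ha⟩ ≤ p⁻¹ :=
  le_of_tendsto' (hφ _) fun m => phim_le_inv hPX hp hp_top hdom m a ha

lemma tsum_mul_phi_eq_one (hν : IsExactLumping PX PZ f ν) (hPX : IsStochastic PX)
    (hPY : IsStochastic PY) (hPZ : IsStochastic PZ) (hp : p ≠ 0) (hp_top : p ≠ ∞)
    (hdom : ∀ m w, p * imagePathProb PY g m y w ≤ pathProb PZ m (g y) w)
    (hφ : ∀ d, Tendsto (fun m => phim (Rmat PX PY PZ f g) m d) atTop (𝓝 (φ d))) :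
    ∑' a : {a // f a = g y}, ν (g y) a * φ ⟨(a, y), a.2⟩ = 1 := by
  have h := ENNReal.tendsto_tsum_of_dominated (bound := fun a : {a // f a = g y} => ν (g y) a * p⁻¹)
    (fun m a => mul_le_mul_right (phim_le_inv hPX hp hp_top hdom m a a.2) _)
    (by rw [ENNReal.tsum_mul_right, hν.tsum_fiber_eq_one, one_mul]; exact ENNReal.inv_ne_top.2 hp)
    (fun a => ENNReal.Tendsto.const_mul (hφ _) (.inr (hν.ne_top _ _)))
  simp_rw [tsum_mul_phim_eq_one hν hPY hPZ hp hdom] at h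
  exact tendsto_nhds_unique h tendsto_const_nhds

lemma tsum_mul_Rmat (hν : IsExactLumping PX PZ f ν) (hPZ : IsStochastic PZ) (hp : p ≠ 0)
    (hdom : ∀ m w, p * imagePathProb PY g m y w ≤ pathProb PZ m (g y) w) (e : Delta f g) :
    ∑' a : {a // f a = g y}, ν (g y) a * Rmat PX PY PZ f g ⟨(a, y), a.2⟩ e
      = PY y e.1.2 * ν (g e.1.2) e.1.1 := by
  simp only [Rmat_apply]
  by_cases hz : PZ (g y) (g e.1.2) = 0
  · simp [hz, transition_eq_zero_of_lumped_eq_zero hp hdom hz]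
  simp only [ne_eq, hz, not_false_eq_true, if_true, ← mul_div_assoc, ← mul_assoc]
  simp only [div_eq_mul_inv, ENNReal.tsum_mul_right]
  rw [hν.tsum_mul_eq (g y) (g e.1.2) e.1.1 e.2]
  calc _ = PY y e.1.2 * ν (g e.1.2) e.1.1 * (PZ (g y) (g e.1.2) * (PZ (g y) (g e.1.2))⁻¹) := by
        ring
    _ = _ := by rw [ENNReal.mul_inv_cancel hz (hPZ.apply_ne_top _ _), mul_one]

lemma tsum_mul_Rmat_mul_phi_div (hν : IsExactLumping PX PZ f ν) (hPX : IsStochastic PX)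
    (hPY : IsStochastic PY) (hPZ : IsStochastic PZ) (hp : p ≠ 0) (hp_top : p ≠ ∞)
    (hdom : ∀ m w, p * imagePathProb PY g m y w ≤ pathProb PZ m (g y) w)
    (hφ : ∀ d, Tendsto (fun m => phim (Rmat PX PY PZ f g) m d) atTop (𝓝 (φ d))) (e : Delta f g) :
    ∑' a : {a // f a = g y}, ν (g y) a * φ ⟨(a, y), a.2⟩
        * (Rmat PX PY PZ f g ⟨(a, y), a.2⟩ e * φ e / φ ⟨(a, y), a.2⟩)
      = PY y e.1.2 * (ν (g e.1.2) e.1.1 * φ e) := by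
  have hterm (a : {a // f a = g y}) : ν (g y) a * φ ⟨(a, y), a.2⟩
      * (Rmat PX PY PZ f g ⟨(a, y), a.2⟩ e * φ e / φ ⟨(a, y), a.2⟩)
        = ν (g y) a * Rmat PX PY PZ f g ⟨(a, y), a.2⟩ e * φ e := by
    rw [mul_assoc, mul_assoc]
    congr 1
    by_cases h0 : φ ⟨(a, y), a.2⟩ = 0
    · -- `φ` is superharmonic for `R`, so it vanishes on the successors of its zeros.
      have h := (ENNReal.le_tsum e).trans ((tsum_Rmat_mul_le hPX hPY hφ _).trans_eq h0)
      rw [h0, zero_mul, nonpos_iff_eq_zero.1 h]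
    · exact ENNReal.mul_div_cancel h0 (ne_top_of_le_ne_top (ENNReal.inv_ne_top.2 hp)
        (phi_le_inv hPX hp hp_top hdom hφ a a.2))
  rw [tsum_congr hterm, ENNReal.tsum_mul_right, tsum_mul_Rmat hν hPZ hp hdom, mul_assoc]

end Fiber

section Initial

variable {A B C : Type*} {f : A → C} {g : B → C} {ν : C → A → ℝ≥0∞}
  {αX : A → ℝ≥0∞} {αY : B → ℝ≥0∞} {αZ : C → ℝ≥0∞}

lemma IsExactLumping.eq_lumped_mul_of_mixture {PX : A → A → ℝ≥0∞} {PZ : C → C → ℝ≥0∞}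
    (hν : IsExactLumping PX PZ f ν) (hαZ : ∀ c, αZ c = ∑' a : {a // f a = c}, αX a)
    (hcc : ∃ w : C → ℝ≥0∞, ∀ a, αX a = ∑' c, w c * ν c a) (a : A) :
    αX a = αZ (f a) * ν (f a) a := by
  obtain ⟨w, hw⟩ := hcc
  have hαX (a : A) : αX a = w (f a) * ν (f a) a := by
    rw [hw, tsum_eq_single (f a) fun c hc => by rw [hν.eq_zero_of_ne c a (Ne.symm hc), mul_zero]]
  have hwZ (c : C) : αZ c = w c := by
    rw [hαZ, tsum_congr fun a : {a // f a = c} => by rw [hαX, a.2], ENNReal.tsum_mul_left,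
      hν.tsum_fiber_eq_one, mul_one]
  rw [hαX, hwZ]

lemma alphaW_eq (hαX : ∀ a, αX a = αZ (f a) * ν (f a) a) (hαY : ∀ b, αY b ≤ αZ (g b))
    (hαZ : ∀ c, αZ c ≠ ∞) (φ : Delta f g → ℝ≥0∞) (d : Delta f g) :
    alphaW αX αY αZ f g φ d = αY d.1.2 * (ν (g d.1.2) d.1.1 * φ d) := by
  rw [alphaW, hαX, d.2]
  split_ifs with hz
  · calc _ = αY d.1.2 * (ν (g d.1.2) d.1.1 * φ d) * (αZ (g d.1.2) / αZ (g d.1.2)) := by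
          simp only [div_eq_mul_inv]; ring
      _ = _ := by rw [ENNReal.div_self hz (hαZ _), mul_one]
  · rw [nonpos_iff_eq_zero.1 ((hαY _).trans_eq (not_ne_iff.1 hz)), zero_mul]

end Initial

def deltaFiberEquiv {A B C : Type*} (f : A → C) (g : B → C) (y : B) :
    {a // f a = g y} ≃ {d : Delta f g // d.1.2 = y} where
  toFun a := ⟨⟨(a, y), a.2⟩, rfl⟩
  invFun d := ⟨d.1.1.1, d.1.2.trans (congrArg g d.2)⟩
  left_inv _ := rfl
  right_inv := by rintro ⟨⟨⟨a, b⟩, hab⟩, rfl⟩; rfl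

theorem statement_6_general
    {A B C : Type*} [Countable A] [Countable B] [Countable C]
    [MeasurableSpace A] [MeasurableSingletonClass A]
    [MeasurableSpace B] [MeasurableSingletonClass B]
    [MeasurableSpace C] [MeasurableSingletonClass C]
    (αX : A → ℝ≥0∞) (PX : A → A → ℝ≥0∞) (μX : Measure (ℕ → A))
    (αY : B → ℝ≥0∞) (PY : B → B → ℝ≥0∞) (μY : Measure (ℕ → B))
    (αZ : C → ℝ≥0∞) (PZ : C → C → ℝ≥0∞) (μZ : Measure (ℕ → C))
    (f : A → C) (g : B → C)
    (hX : IsMarkovChain αX PX μX) (hY : IsMarkovChain αY PY μY)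
    (hZ : IsMarkovChain αZ PZ μZ)
    (hfX : μX.map (fun ω n => f (ω n)) = μZ)
    (hgY : μY.map (fun ω n => g (ω n)) = μZ)
    (hBvis : ∀ b : B, ∃ t : ℕ, μY {ω | ω t = b} ≠ 0)
    (ν : C → A → ℝ≥0∞)
    (hν0 : ∀ (c : C) (a : A), f a ≠ c → ν c a = 0)
    (hν1 : ∀ c : C, ∑' a : A, ν c a = 1)
    (hEL : ∀ (c c' : C) (a' : A), f a' = c' →
      ∑' a : {x : A // f x = c}, ν c a.1 * PX a.1 a' = PZ c c' * ν c' a')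
    (hcc : ∃ w : C → ℝ≥0∞, ∑' c, w c = 1 ∧ ∀ a : A, αX a = ∑' c, w c * ν c a)
    (φ : Delta f g → ℝ≥0∞)
    (hφ : ∀ d : Delta f g,
      Tendsto (fun m => phim (Rmat PX PY PZ f g) m d) atTop (𝓝 (φ d))) :
    (∀ y : B, ∑' d : {d : Delta f g // d.1.2 = y}, ν (g y) d.1.1.1 * φ d.1 = 1) ∧
    (∀ (b b' : B) (e : Delta f g), e.1.2 = b' →
      ∑' d : {d : Delta f g // d.1.2 = b},
        (ν (g b) d.1.1.1 * φ d.1) * (Rmat PX PY PZ f g d.1 e * φ e / φ d.1)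
        = PY b b' * (ν (g b') e.1.1 * φ e)) ∧
    (∀ d : Delta f g,
      alphaW αX αY αZ f g φ d
        = ∑' y : B, αY y * (if d.1.2 = y then ν (g d.1.2) d.1.1 * φ d else 0)) := by
  have hν : IsExactLumping PX PZ f ν := ⟨hν0, hν1, hEL⟩
  have hdom (y : B) := exists_mul_imagePathProb_le hY hZ hgY (hBvis y)
  refine ⟨fun y => ?_, fun b b' e he => ?_, fun d => ?_⟩
  · obtain ⟨p, hp, hp_top, hdom⟩ := hdom y
    rw [← (deltaFiberEquiv f g y).tsum_eq]
    exact tsum_mul_phi_eq_one hν hX.2.2.1 hY.2.2.1 hZ.2.2.1 hp hp_top hdom hφ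
  · obtain ⟨p, hp, hp_top, hdom⟩ := hdom b
    subst he
    rw [← (deltaFiberEquiv f g b).tsum_eq]
    exact tsum_mul_Rmat_mul_phi_div hν hX.2.2.1 hY.2.2.1 hZ.2.2.1 hp hp_top hdom hφ e
  · have hαZ (c : C) : αZ c = ∑' a : {a // f a = c}, αX a := by
      rw [← hZ.measure_eval_zero, measure_eval_eq_of_map_eq hfX 0 c]
      simp only [hX.measure_eval_zero]
    have hαX := hν.eq_lumped_mul_of_mixture hαZ (hcc.imp fun _ => And.right)
    have hαY (b : B) : αY b ≤ αZ (g b) := by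
      simpa only [hY.measure_eval_zero, hZ.measure_eval_zero] using
        measure_eval_le_of_map_eq hgY 0 b
    rw [alphaW_eq hαX hαY (fun c => hZ.measure_eval_zero c ▸ hZ.measure_ne_top _)]
    simp [mul_ite]

/-- **Exact lumping case (Proposition `g exact proj1 exact`).** If `f` is an exact lumping of
`MC(α_X,P_X)` to `MC(α_Z,P_Z)` with respect to a family `(ν_c)_{c ∈ C}`, then the projection
`proj² : Δ' → B` is an exact lumping of `MC(α,P)` to `MC(α_Y,P_Y)`: explicitly, the family
`μ_y(a,b) = ν_{g(b)}(a) * φ(a,b)` if `b = y` and `0` otherwise consists of probability vectors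
on the fibres of `proj²`, satisfies the exact lumping equation for `P` and `P_Y`, and
`α = Σ_{y ∈ B} α_Y(y) μ_y`. -/
theorem statement_6
    {A B C : Type*} [Countable A] [Countable B] [Countable C]
    [MeasurableSpace A] [MeasurableSingletonClass A]
    [MeasurableSpace B] [MeasurableSingletonClass B]
    [MeasurableSpace C] [MeasurableSingletonClass C]
    (αX : A → ℝ≥0∞) (PX : A → A → ℝ≥0∞) (μX : Measure (ℕ → A))
    (αY : B → ℝ≥0∞) (PY : B → B → ℝ≥0∞) (μY : Measure (ℕ → B))
    (αZ : C → ℝ≥0∞) (PZ : C → C → ℝ≥0∞) (μZ : Measure (ℕ → C))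
    (f : A → C) (g : B → C)
    (hX : IsMarkovChain αX PX μX) (hY : IsMarkovChain αY PY μY)
    (hZ : IsMarkovChain αZ PZ μZ)
    (hfX : μX.map (fun ω n => f (ω n)) = μZ)
    (hgY : μY.map (fun ω n => g (ω n)) = μZ)
    (hAvis : ∀ a : A, ∃ t : ℕ, μX {ω | ω t = a} ≠ 0)
    (hBvis : ∀ b : B, ∃ t : ℕ, μY {ω | ω t = b} ≠ 0)
    (hfsurj : Function.Surjective f)
    (ν : C → A → ℝ≥0∞)
    (hν0 : ∀ (c : C) (a : A), f a ≠ c → ν c a = 0)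
    (hν1 : ∀ c : C, ∑' a : A, ν c a = 1)
    (hEL : ∀ (c c' : C) (a' : A), f a' = c' →
      ∑' a : {x : A // f x = c}, ν c a.1 * PX a.1 a' = PZ c c' * ν c' a')
    (hcc : ∃ w : C → ℝ≥0∞, ∑' c, w c = 1 ∧ ∀ a : A, αX a = ∑' c, w c * ν c a)
    (φ : Delta f g → ℝ≥0∞)
    (hφ : ∀ d : Delta f g,
      Tendsto (fun m => phim (Rmat PX PY PZ f g) m d) atTop (𝓝 (φ d))) :
    (∀ y : B, ∑' d : {d : Delta f g // d.1.2 = y}, ν (g y) d.1.1.1 * φ d.1 = 1) ∧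
    (∀ (b b' : B) (e : Delta f g), e.1.2 = b' →
      ∑' d : {d : Delta f g // d.1.2 = b},
        (ν (g b) d.1.1.1 * φ d.1) * (Rmat PX PY PZ f g d.1 e * φ e / φ d.1)
        = PY b b' * (ν (g b') e.1.1 * φ e)) ∧
    (∀ d : Delta f g,
      alphaW αX αY αZ f g φ d
        = ∑' y : B, αY y * (if d.1.2 = y then ν (g d.1.2) d.1.1 * φ d else 0)) :=
  statement_6_general αX PX μX αY PY μY αZ PZ μZ f g hX hY hZ hfX hgY hBvis ν hν0 hν1 hEL hcc φ hφ
end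

section
/- In the two-sided stationary setup, let k ≤ ℓ be integers, (a_k,b_k), …, (a_ℓ,b_ℓ) ∈ Δ with c_i = f(a_i) = g(b_i), and suppose P(Z_k = c_k, …, Z_ℓ = c_ℓ) > 0. Then for every m ≥ max(|k|,|ℓ|), P(W^{−m,m}_k = (a_k,b_k), …, W^{−m,m}_ℓ = (a_ℓ,b_ℓ)) = (π_X(a_k)·π_Y(b_k)/π_Z(c_k)) · φ^rev_{m+k}(a_k,b_k) · φ_{m−ℓ}(a_ℓ,b_ℓ) · Π_{i=k+1}^{ℓ} R((a_{i−1},b_{i−1}),(a_i,b_i)). -/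
open MeasureTheory Filter Topology
open scoped ENNReal Classical

/-- `μ` is the law on two-sided path space of a stationary time-homogeneous Markov chain with
stationary one-dimensional distribution `π` and transition matrix `P`. -/
def IsStatMarkovChainZ {U : Type*} [MeasurableSpace U]
    (π : U → ℝ≥0∞) (P : U → U → ℝ≥0∞) (μ : Measure (ℤ → U)) : Prop :=
  IsProbabilityMeasure μ ∧ IsProbVec π ∧ IsStochastic P ∧
    ∀ (t : ℤ) (k : ℕ) (a : ℕ → U),
      μ {ω | ∀ i ≤ k, ω (t + (i : ℤ)) = a i}
        = π (a 0) * ∏ i ∈ Finset.range k, P (a i) (a (i + 1))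

/-- The transition matrix of the time reversal: `P^rev(x',x) = π(x) P(x,x') / π(x')`. -/
noncomputable def revMat {U : Type*} (π : U → ℝ≥0∞) (P : U → U → ℝ≥0∞) (x' x : U) : ℝ≥0∞ :=
  π x * P x x' / π x'

/-- The conditional probability of the cylinder event `{X_k = a_k, …, X_l = a_l}` given
`f(X_j) = z_j` for `|j| ≤ m`, as a function of the two-sided image trajectory `z`. -/
noncomputable def condCylZ {A C : Type*} [MeasurableSpace A]
    (μ : Measure (ℤ → A)) (f : A → C) (z : ℤ → C) (m : ℕ) (k l : ℤ) (a : ℤ → A) : ℝ≥0∞ :=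
  μ {ω | (∀ i : ℤ, k ≤ i → i ≤ l → ω i = a i) ∧ ∀ j : ℤ, j.natAbs ≤ m → f (ω j) = z j}
    / μ {ω | ∀ j : ℤ, j.natAbs ≤ m → f (ω j) = z j}

/-!
On the window `[-m, m]` each conditional probability is `N(u) / P(Z = u)`, where `u` is the
`Z`-path and `N(u)` is the weight of the pinned `X`- (resp. `Y`-) paths lying over `u`, so the
integral is `∑_u N_X(u) N_Y(u) / P(Z = u)`. As `u = f ∘ x = g ∘ y`, this is a sum over paths
`d_{-m}, …, d_m` in `Δ` of `ν(d_{-m}) ∏ R(d_i, d_{i+1})` with `ν(a, b) = π_X(a) π_Y(b) / π_Z(f a)`,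
the paths being pinned to `(a_i, b_i)` for `k ≤ i ≤ l`. Summing out the free tail after `l` gives
`φ_{m-l}(a_l, b_l)`; the free head before `k` is summed by the detailed balance
`ν(d) R(d, e) = ν(e) R^rev(e, d)`, which turns `ν R^{m+k}` into `ν · φ^rev_{m+k}`.
-/

lemma ENNReal.div_mul_div_mul_self {a b c : ℝ≥0∞} (hac : a ≤ c) (hc : c ≠ ∞) :
    a / c * (b / c) * c = a * b * c⁻¹ := by
  rcases eq_or_ne c 0 with rfl | hc0
  · simp [nonpos_iff_eq_zero.mp hac]
  · calc a / c * (b / c) * c = a * b * c⁻¹ * (c⁻¹ * c) := by simp only [div_eq_mul_inv]; ring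
      _ = a * b * c⁻¹ := by rw [ENNReal.inv_mul_cancel hc0 hc, mul_one]

lemma Finset.prod_Ico_eq_prod_Icc_shift {M : Type*} [CommMonoid M] (F : ℤ → ℤ → M) {t k l : ℤ}
    {K L : ℕ} (hK : t + K = k) (hL : t + L = l) :
    ∏ i ∈ Finset.Ico K L, F (t + i) (t + (i + 1 : ℕ))
      = ∏ i ∈ Finset.Icc (k + 1) l, F (i - 1) i := by
  refine Finset.prod_nbij' (fun i => t + i + 1) (fun j => (j - 1 - t).toNat) ?_ ?_ ?_ ?_
    fun i _ => by congr 1 <;> omega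
  all_goals intro i hi; simp only [Finset.mem_Ico, Finset.mem_Icc] at hi ⊢; omega

section Transfer

variable {D : Type*}

noncomputable def pathWeight (ν : D → ℝ≥0∞) (R : D → D → ℝ≥0∞) {n : ℕ} (p : Fin (n + 1) → D) :
    ℝ≥0∞ :=
  ν (p 0) * ∏ i : Fin n, R (p i.castSucc) (p i.succ)

lemma pathWeight_snoc (ν : D → ℝ≥0∞) (R : D → D → ℝ≥0∞) {n : ℕ} (p : Fin (n + 1) → D) (e : D) :
    pathWeight ν R (Fin.snoc p e : Fin (n + 2) → D) = pathWeight ν R p * R (p (Fin.last n)) e := by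
  have h0 : Fin.snoc (α := fun _ => D) p e 0 = p 0 := by simp
  simp only [pathWeight, Fin.prod_univ_castSucc, Fin.succ_castSucc, Fin.snoc_castSucc,
    Fin.snoc_last, Fin.succ_last, h0, mul_assoc]

noncomputable def vecMulPow (ν : D → ℝ≥0∞) (R : D → D → ℝ≥0∞) : ℕ → D → ℝ≥0∞
  | 0 => ν
  | n + 1 => fun e => ∑' d, vecMulPow ν R n d * R d e

lemma vecMulPow_eq_mul_phim {ν : D → ℝ≥0∞} {R R' : D → D → ℝ≥0∞}
    (hrev : ∀ d e, ν d * R d e = ν e * R' e d) : ∀ n e, vecMulPow ν R n e = ν e * phim R' n e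
  | 0, e => (mul_one _).symm
  | n + 1, e => by
    calc vecMulPow ν R (n + 1) e = ∑' d, ν d * R d e * phim R' n d := by
          simp only [vecMulPow, vecMulPow_eq_mul_phim hrev n, mul_right_comm]
      _ = ν e * phim R' (n + 1) e := by
          simp only [hrev, mul_assoc, ENNReal.tsum_mul_left, phim]

def pathsThrough (S : ℕ → Set D) (n : ℕ) : Set (Fin (n + 1) → D) :=
  {p | ∀ i : Fin (n + 1), p i ∈ S i}

noncomputable def constrainedMass (ν : D → ℝ≥0∞) (R : D → D → ℝ≥0∞) (S : ℕ → Set D) :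
    ℕ → D → ℝ≥0∞
  | 0 => (S 0).indicator ν
  | n + 1 => (S (n + 1)).indicator fun e => ∑' d, constrainedMass ν R S n d * R d e

variable (ν : D → ℝ≥0∞) (R : D → D → ℝ≥0∞) (S : ℕ → Set D)

lemma constrainedMass_eq_zero_of_notMem {n : ℕ} {d : D} (hd : d ∉ S n) :
    constrainedMass ν R S n d = 0 := by
  cases n <;> exact Set.indicator_of_notMem hd _

lemma tsum_indicator_pathWeight_mul : ∀ (n : ℕ) (h : D → ℝ≥0∞),
    ∑' p : Fin (n + 1) → D, (pathsThrough S n).indicator (pathWeight ν R) p * h (p (Fin.last n))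
      = ∑' e, constrainedMass ν R S n e * h e
  | 0, h => by
    rw [← (Equiv.funUnique (Fin 1) D).symm.tsum_eq]
    refine tsum_congr fun e => ?_
    simp [Set.indicator_apply, pathsThrough, pathWeight, constrainedMass]
  | n + 1, h => by
    have hsnoc : ∀ (p : Fin (n + 1) → D) (e : D),
        (pathsThrough S (n + 1)).indicator (pathWeight ν R) (Fin.snoc p e : Fin (n + 2) → D)
          * h e
          = (pathsThrough S n).indicator (pathWeight ν R) p
            * ((S (n + 1)).indicator (R (p (Fin.last n))) e * h e) := by
      intro p e
      by_cases he : e ∈ S (n + 1) <;>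
        simp [Set.indicator_apply, pathsThrough, Fin.forall_fin_succ', pathWeight_snoc, he,
          mul_assoc]
    calc _ = ∑' p : Fin (n + 1) → D, ∑' e, (pathsThrough S n).indicator (pathWeight ν R) p
            * ((S (n + 1)).indicator (R (p (Fin.last n))) e * h e) := by
          rw [← (Fin.snocEquiv fun _ => D).tsum_eq, ENNReal.tsum_prod', ENNReal.tsum_comm]
          refine tsum_congr fun p => tsum_congr fun e => ?_
          rw [show (Fin.snocEquiv fun _ => D) (e, p) = Fin.snoc p e from rfl, Fin.snoc_last]
          exact hsnoc p e
      _ = ∑' d, constrainedMass ν R S n d * ∑' e, (S (n + 1)).indicator (R d) e * h e := by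
          simp only [ENNReal.tsum_mul_left]
          exact tsum_indicator_pathWeight_mul n fun d => ∑' e, (S (n + 1)).indicator (R d) e * h e
      _ = ∑' e, constrainedMass ν R S (n + 1) e * h e := by
          simp only [← ENNReal.tsum_mul_left]
          rw [ENNReal.tsum_comm]
          refine tsum_congr fun e => ?_
          by_cases he : e ∈ S (n + 1)
          · simp only [constrainedMass, Set.indicator_of_mem he, ← ENNReal.tsum_mul_right,
              mul_assoc]
          · simp [constrainedMass, Set.indicator_of_notMem he]

lemma tsum_indicator_pathWeight (n : ℕ) :
    ∑' p : Fin (n + 1) → D, (pathsThrough S n).indicator (pathWeight ν R) p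
      = ∑' e, constrainedMass ν R S n e := by
  simpa using tsum_indicator_pathWeight_mul ν R S n 1

lemma constrainedMass_of_forall_lt_eq_univ {n : ℕ} (hS : ∀ i < n, S i = Set.univ) :
    constrainedMass ν R S n = (S n).indicator (vecMulPow ν R n) := by
  induction n with
  | zero => rfl
  | succ n ih =>
    rw [constrainedMass, ih fun i hi => hS i (by omega), hS n (by omega), Set.indicator_univ]
    rfl

lemma constrainedMass_add_of_eq_singleton (c : ℕ → D) (n : ℕ) :
    ∀ j, (∀ i, n ≤ i → i ≤ n + j → S i = {c i}) →
      constrainedMass ν R S (n + j) (c (n + j))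
        = constrainedMass ν R S n (c n) * ∏ i ∈ Finset.range j, R (c (n + i)) (c (n + i + 1))
  | 0, _ => by simp
  | j + 1, hS => by
    have hsupp : ∀ d ≠ c (n + j), constrainedMass ν R S (n + j) d * R d (c (n + j + 1)) = 0 :=
      fun d hd => by
        have hd' : d ∉ S (n + j) := by rw [hS (n + j) (by omega) (by omega)]; exact hd
        rw [constrainedMass_eq_zero_of_notMem ν R S hd', zero_mul]
    rw [← add_assoc, constrainedMass, hS (n + j + 1) (by omega) le_rfl,
      Set.indicator_of_mem (Set.mem_singleton _), tsum_eq_single _ hsupp,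
      constrainedMass_add_of_eq_singleton c n j fun i h1 h2 => hS i h1 (by omega),
      Finset.prod_range_succ, mul_assoc]

lemma tsum_constrainedMass_add_mul_phim (n : ℕ) :
    ∀ j, (∀ i, n < i → i ≤ n + j → S i = Set.univ) → ∀ q,
      ∑' e, constrainedMass ν R S (n + j) e * phim R q e
        = ∑' d, constrainedMass ν R S n d * phim R (q + j) d
  | 0, _, q => rfl
  | j + 1, hS, q => by
    have hstep : ∀ e, constrainedMass ν R S (n + (j + 1)) e
        = ∑' d, constrainedMass ν R S (n + j) d * R d e := fun e => by
      rw [← add_assoc, constrainedMass, hS _ (by omega) (by omega), Set.indicator_univ]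
    calc ∑' e, constrainedMass ν R S (n + (j + 1)) e * phim R q e
        = ∑' e, ∑' d, constrainedMass ν R S (n + j) d * (R d e * phim R q e) := by
          simp only [hstep, ← ENNReal.tsum_mul_right, mul_assoc]
      _ = ∑' d, constrainedMass ν R S (n + j) d * phim R (q + 1) d := by
          rw [ENNReal.tsum_comm]
          simp only [phim, ENNReal.tsum_mul_left]
      _ = ∑' d, constrainedMass ν R S n d * phim R (q + (j + 1)) d := by
          rw [tsum_constrainedMass_add_mul_phim n j (fun i h1 h2 => hS i h1 (by omega)) (q + 1),
            add_right_comm, add_assoc]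

theorem tsum_constrainedMass_interval {R' : D → D → ℝ≥0∞}
    (hrev : ∀ d e, ν d * R d e = ν e * R' e d) (c : ℕ → D) {K L n : ℕ} (hKL : K ≤ L)
    (hLn : L ≤ n) :
    ∑' e, constrainedMass ν R (fun i => {d | i ∈ Finset.Icc K L → d = c i}) n e
      = ν (c K) * phim R' K (c K) * (∏ i ∈ Finset.Ico K L, R (c i) (c (i + 1)))
        * phim R (n - L) (c L) := by
  set S : ℕ → Set D := fun i => {d | i ∈ Finset.Icc K L → d = c i}
  have hfree : ∀ i, i ∉ Finset.Icc K L → S i = Set.univ := fun i hi =>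
    Set.eq_univ_of_forall fun d h => absurd h hi
  have hfixed : ∀ i, i ∈ Finset.Icc K L → S i = {c i} := fun i hi =>
    Set.ext fun d => ⟨fun h => h hi, fun h _ => h⟩
  have hhead : constrainedMass ν R S K (c K) = ν (c K) * phim R' K (c K) := by
    rw [constrainedMass_of_forall_lt_eq_univ ν R S fun i hi => hfree i (by simp; omega),
      hfixed K (by simp; omega), Set.indicator_of_mem (Set.mem_singleton _),
      vecMulPow_eq_mul_phim hrev]
  have hmid := constrainedMass_add_of_eq_singleton ν R S c K (L - K)
    fun i h1 h2 => hfixed i (by simp; omega)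
  have htail := tsum_constrainedMass_add_mul_phim ν R S L (n - L)
    (fun i h1 _ => hfree i (by simp; omega)) 0
  rw [Nat.add_sub_cancel' hKL, hhead] at hmid
  rw [Nat.add_sub_cancel' hLn, zero_add] at htail
  simp only [phim, mul_one] at htail
  rw [htail, tsum_eq_single (c L) fun d hd => by
      rw [constrainedMass_eq_zero_of_notMem ν R S (by rw [hfixed L (by simp; omega)]; exact hd),
        zero_mul],
    hmid, Finset.prod_Ico_eq_prod_range]

end Transfer

section Coupling

variable {A B C : Type*} (f : A → C) (g : B → C)

def pathsOver (E : ℕ → Set A) {s : ℕ} (u : Fin (s + 1) → C) : Set (Fin (s + 1) → A) :=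
  {v | ∀ i, f (v i) = u i ∧ v i ∈ E i}

noncomputable def pairWeight (πX : A → ℝ≥0∞) (πY : B → ℝ≥0∞) (πZ : C → ℝ≥0∞) (d : Delta f g) :
    ℝ≥0∞ :=
  πX d.1.1 * πY d.1.2 / πZ (f d.1.1)

lemma tsum_pi_delta {ι : Type*} (F : (ι → Delta f g) → ℝ≥0∞) :
    ∑' p, F p = ∑' v : ι → A, ∑' w : ι → B,
      if h : ∀ i, f (v i) = g (w i) then F fun i => ⟨(v i, w i), h i⟩ else 0 := by
  let S := {q : (ι → A) × (ι → B) | ∀ i, f (q.1 i) = g (q.2 i)}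
  let G : (ι → A) × (ι → B) → ℝ≥0∞ := fun q =>
    if h : ∀ i, f (q.1 i) = g (q.2 i) then F fun i => ⟨(q.1 i, q.2 i), h i⟩ else 0
  let e : (ι → Delta f g) ≃ S :=
    { toFun := fun p => ⟨(fun i => (p i).1.1, fun i => (p i).1.2), fun i => (p i).2⟩
      invFun := fun q i => ⟨(q.1.1 i, q.1.2 i), q.2 i⟩
      left_inv := fun _ => rfl
      right_inv := fun _ => rfl }
  calc ∑' p, F p = ∑' q : S, F (e.symm q) := (e.symm.tsum_eq F).symm
    _ = ∑' q : S, G q := tsum_congr fun q => by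
      have hq : ∀ i, f ((q : (ι → A) × (ι → B)).1 i) = g ((q : (ι → A) × (ι → B)).2 i) := q.2
      simp only [G, dif_pos hq]
      rfl
    _ = ∑' q, S.indicator G q := tsum_subtype S G
    _ = ∑' q, G q := by
      have hG : S.indicator G = G :=
        Set.indicator_eq_self.mpr fun q hq => by_contra fun h => hq (dif_neg h)
      rw [hG]
    _ = _ := ENNReal.tsum_prod'

variable {PX : A → A → ℝ≥0∞} {PY : B → B → ℝ≥0∞} {PZ : C → C → ℝ≥0∞}

-- If `PZ` vanishes then so does `PX`, and `0 * ∞ = 0` in `ℝ≥0∞`.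
lemma Rmat_eq_mul_inv (hc : ∀ x x', PZ (f x) (f x') = 0 → PX x x' = 0) (d e : Delta f g) :
    Rmat PX PY PZ f g d e = PX d.1.1 e.1.1 * PY d.1.2 e.1.2 * (PZ (f d.1.1) (f e.1.1))⁻¹ := by
  by_cases hz : PZ (f d.1.1) (f e.1.1) = 0
  · simp [Rmat, hz, hc _ _ hz]
  · rw [Rmat, if_pos hz, div_eq_mul_inv]

variable {πX : A → ℝ≥0∞} {πY : B → ℝ≥0∞} {πZ : C → ℝ≥0∞}

lemma pairWeight_mul_Rmat_eq_rev (hπX : ∀ x, πX x ≠ 0) (hπXt : ∀ x, πX x ≠ ∞)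
    (hπY : ∀ y, πY y ≠ 0) (hπYt : ∀ y, πY y ≠ ∞) (hπZ : ∀ c, πZ c ≠ 0) (hπZt : ∀ c, πZ c ≠ ∞)
    (d e : Delta f g) :
    pairWeight f g πX πY πZ d * Rmat PX PY PZ f g d e
      = pairWeight f g πX πY πZ e * Rmat (revMat πX PX) (revMat πY PY) (revMat πZ PZ) f g e d := by
  obtain ⟨⟨x, y⟩, hxy⟩ := d
  obtain ⟨⟨x', y'⟩, hxy'⟩ := e
  by_cases hz : PZ (f x) (f x') = 0
  · simp [Rmat, revMat, hz]
  have hrev : revMat πZ PZ (f x') (f x) ≠ 0 := by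
    simp [revMat, ENNReal.div_eq_zero_iff, hπZ, hz, hπZt]
  have hX : πX x' * revMat πX PX x' x = πX x * PX x x' := ENNReal.mul_div_cancel (hπX x') (hπXt x')
  have hY : πY y' * revMat πY PY y' y = πY y * PY y y' := ENNReal.mul_div_cancel (hπY y') (hπYt y')
  have hZ : (πZ (f x'))⁻¹ * (revMat πZ PZ (f x') (f x))⁻¹ = (πZ (f x))⁻¹ * (PZ (f x) (f x'))⁻¹ := by
    rw [← ENNReal.mul_inv (.inl (hπZ _)) (.inl (hπZt _)), revMat,
      ENNReal.mul_div_cancel (hπZ _) (hπZt _), ENNReal.mul_inv (.inl (hπZ _)) (.inl (hπZt _))]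
  simp only [Rmat, if_pos hz, if_pos hrev, pairWeight, div_eq_mul_inv]
  calc πX x * πY y * (πZ (f x))⁻¹ * (PX x x' * PY y y' * (PZ (f x) (f x'))⁻¹)
      = πX x * PX x x' * (πY y * PY y y') * ((πZ (f x))⁻¹ * (PZ (f x) (f x'))⁻¹) := by ring
    _ = _ := by rw [← hX, ← hY, ← hZ]; ring

lemma pathWeight_pairWeight_Rmat (hc : ∀ x x', PZ (f x) (f x') = 0 → PX x x' = 0)
    (hπZt : ∀ c, πZ c ≠ ∞) (hPZt : ∀ c c', PZ c c' ≠ ∞) {s : ℕ} (p : Fin (s + 1) → Delta f g) :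
    pathWeight πX PX (fun i => (p i).1.1) * pathWeight πY PY (fun i => (p i).1.2)
        * (pathWeight πZ PZ fun i => f (p i).1.1)⁻¹
      = pathWeight (pairWeight f g πX πY πZ) (Rmat PX PY PZ f g) p := by
  have hinv : (pathWeight πZ PZ fun i => f (p i).1.1)⁻¹
      = (πZ (f (p 0).1.1))⁻¹ * ∏ i : Fin s, (PZ (f (p i.castSucc).1.1) (f (p i.succ).1.1))⁻¹ := by
    rw [pathWeight,
      ENNReal.mul_inv (.inr (ENNReal.prod_ne_top fun _ _ => hPZt _ _)) (.inl (hπZt _)),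
      ENNReal.prod_inv_distrib fun _ _ _ _ _ => .inr (hPZt _ _)]
  rw [hinv]
  simp only [pathWeight, pairWeight, Rmat_eq_mul_inv f g hc, Finset.prod_mul_distrib,
    div_eq_mul_inv]
  ring

lemma tsum_indicator_pathsOver_mul_inv (hc : ∀ x x', PZ (f x) (f x') = 0 → PX x x' = 0)
    (hπZt : ∀ c, πZ c ≠ ∞) (hPZt : ∀ c c', PZ c c' ≠ ∞) (EX : ℕ → Set A) (EY : ℕ → Set B)
    {s : ℕ} (v : Fin (s + 1) → A) (w : Fin (s + 1) → B) :
    ∑' u : Fin (s + 1) → C, (pathsOver f EX u).indicator (pathWeight πX PX) v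
        * ((pathsOver g EY u).indicator (pathWeight πY PY) w * (pathWeight πZ PZ u)⁻¹)
      = if h : ∀ i, f (v i) = g (w i) then
          (pathsThrough (fun i => Subtype.val ⁻¹' (EX i ×ˢ EY i)) s).indicator
            (pathWeight (pairWeight f g πX πY πZ) (Rmat PX PY PZ f g))
            fun i => ⟨(v i, w i), h i⟩
        else 0 := by
  rw [tsum_eq_single (fun i => f (v i)) fun u hu => by
    rw [Set.indicator_of_notMem fun hv => hu (funext fun i => (hv i).1.symm), zero_mul]]
  by_cases h : ∀ i, f (v i) = g (w i)
  swap
  · rw [dif_neg h, Set.indicator_of_notMem (s := pathsOver g EY _)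
      fun hw => h fun i => (hw i).1.symm, zero_mul, mul_zero]
  set p : Fin (s + 1) → Delta f g := fun i => ⟨(v i, w i), h i⟩
  have hp : p ∈ pathsThrough (fun i => Subtype.val ⁻¹' (EX i ×ˢ EY i)) s
      ↔ ∀ i : Fin (s + 1), v i ∈ EX i ∧ w i ∈ EY i := Iff.rfl
  rw [dif_pos h]
  by_cases hE : p ∈ pathsThrough (fun i => Subtype.val ⁻¹' (EX i ×ˢ EY i)) s
  · rw [Set.indicator_of_mem fun i => ⟨rfl, (hp.mp hE i).1⟩,
      Set.indicator_of_mem fun i => ⟨(h i).symm, (hp.mp hE i).2⟩, Set.indicator_of_mem hE,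
      ← mul_assoc]
    exact pathWeight_pairWeight_Rmat f g hc hπZt hPZt p
  rw [Set.indicator_of_notMem hE]
  by_cases hv : ∀ i : Fin (s + 1), v i ∈ EX i
  · rw [Set.indicator_of_notMem (s := pathsOver g EY _)
      fun hw => hE (hp.mpr fun i => ⟨hv i, (hw i).2⟩), zero_mul, mul_zero]
  · rw [Set.indicator_of_notMem (s := pathsOver f EX _) fun hv' => hv fun i => (hv' i).2,
      zero_mul]

end Coupling

section Window

variable {U : Type*}

def window (t : ℤ) (s : ℕ) (ω : ℤ → U) : Fin (s + 1) → U := fun i => ω (t + (i : ℕ))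

lemma forall_natAbs_le_iff (m : ℕ) (φ : ℤ → Prop) :
    (∀ j : ℤ, j.natAbs ≤ m → φ j) ↔ ∀ i : Fin (2 * m + 1), φ (-m + (i : ℕ)) := by
  refine ⟨fun h i => h _ (by omega), fun h j hj => ?_⟩
  have h' := h ⟨(j + m).toNat, by omega⟩
  rwa [show -(m : ℤ) + ((j + m).toNat : ℕ) = j by omega] at h'

lemma forall_Icc_iff_window (a : ℤ → U) {m : ℕ} {k l : ℤ} (hmk : k.natAbs ≤ m)
    (hml : l.natAbs ≤ m) (ω : ℤ → U) :
    (∀ i : ℤ, k ≤ i → i ≤ l → ω i = a i)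
      ↔ ∀ i : Fin (2 * m + 1), window (-m) (2 * m) ω i
          ∈ {x | (i : ℕ) ∈ Finset.Icc (k + m).toNat (l + m).toNat → x = a (-m + (i : ℕ))} := by
  have hwin : (∀ i : ℤ, k ≤ i → i ≤ l → ω i = a i)
      ↔ ∀ j : ℤ, j.natAbs ≤ m → k ≤ j → j ≤ l → ω j = a j :=
    ⟨fun h j _ => h j, fun h j h1 h2 => h j (by omega) h1 h2⟩
  rw [hwin, forall_natAbs_le_iff]
  refine forall_congr' fun i => ?_
  simp only [window, Set.mem_ofPred_eq, Finset.mem_Icc]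
  exact ⟨fun h hi => h (by omega) (by omega), fun h h1 h2 => h ⟨by omega, by omega⟩⟩

variable [MeasurableSpace U] {π : U → ℝ≥0∞} {P : U → U → ℝ≥0∞} {μ : Measure (ℤ → U)}

lemma measurable_window (t : ℤ) (s : ℕ) : Measurable (window (U := U) t s) :=
  measurable_pi_lambda _ fun _ => measurable_pi_apply _

namespace IsStatMarkovChainZ

lemma stat_ne_top (h : IsStatMarkovChainZ π P μ) (u : U) : π u ≠ ∞ :=
  ne_top_of_le_ne_top ENNReal.one_ne_top (h.2.1 ▸ ENNReal.le_tsum u)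

lemma trans_ne_top (h : IsStatMarkovChainZ π P μ) (u w : U) : P u w ≠ ∞ :=
  ne_top_of_le_ne_top ENNReal.one_ne_top (h.2.2.1 u ▸ ENNReal.le_tsum w)

lemma pathWeight_ne_top (h : IsStatMarkovChainZ π P μ) {s : ℕ} (v : Fin (s + 1) → U) :
    pathWeight π P v ≠ ∞ :=
  ENNReal.mul_ne_top (h.stat_ne_top _) (ENNReal.prod_ne_top fun _ _ => h.trans_ne_top _ _)

lemma measure_window_singleton (h : IsStatMarkovChainZ π P μ) (t : ℤ) {s : ℕ}
    (v : Fin (s + 1) → U) : μ (window t s ⁻¹' {v}) = pathWeight π P v := by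
  have hclamp : ∀ i : Fin (s + 1), v (Fin.clamp i s) = v i :=
    fun i => congrArg v (Fin.ext (by simp [Fin.clamp]; omega))
  have hset : window t s ⁻¹' {v} = {ω | ∀ i ≤ s, ω (t + (i : ℤ)) = v (Fin.clamp i s)} := by
    ext ω
    simp only [Set.mem_preimage, Set.mem_singleton_iff, funext_iff, window, Set.mem_ofPred_eq]
    refine ⟨fun H i hi => ?_, fun H i => by simpa [hclamp] using H i (by omega)⟩
    simpa [Fin.clamp, Nat.min_eq_left hi] using H ⟨i, by omega⟩
  rw [hset, h.2.2.2, pathWeight, ← Fin.prod_univ_eq_prod_range (fun i => P (v (Fin.clamp i s))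
    (v (Fin.clamp (i + 1) s)))]
  congr 1
  exact Finset.prod_congr rfl fun i _ => by rw [← hclamp i.castSucc, ← hclamp i.succ]; rfl

lemma lintegral_comp_window [Countable U] [MeasurableSingletonClass U]
    (h : IsStatMarkovChainZ π P μ) (t : ℤ) {s : ℕ} (G : (Fin (s + 1) → U) → ℝ≥0∞) :
    ∫⁻ ω, G (window t s ω) ∂μ = ∑' v, G v * pathWeight π P v := by
  rw [← lintegral_map (measurable_of_countable G) (measurable_window t s), lintegral_countable']
  refine tsum_congr fun v => ?_
  rw [Measure.map_apply (measurable_window t s) (measurableSet_singleton v),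
    h.measure_window_singleton]

lemma measure_window_preimage [Countable U] [MeasurableSingletonClass U]
    (h : IsStatMarkovChainZ π P μ) (t : ℤ) {s : ℕ} (S : Set (Fin (s + 1) → U)) :
    μ (window t s ⁻¹' S) = ∑' v, S.indicator (pathWeight π P) v := by
  rw [← Measure.map_apply (measurable_window t s) S.to_countable.measurableSet,
    ← Measure.tsum_indicator_apply_singleton _ _ S.to_countable.measurableSet]
  refine tsum_congr fun v => ?_
  simp only [Set.indicator_apply, Measure.map_apply (measurable_window t s)
    (measurableSet_singleton v), h.measure_window_singleton]

end IsStatMarkovChainZ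

end Window

section Lumped

variable {A C : Type*} [MeasurableSpace A] [MeasurableSpace C] [Countable A]
  [MeasurableSingletonClass A] [MeasurableSingletonClass C]
  {πX : A → ℝ≥0∞} {PX : A → A → ℝ≥0∞} {μX : Measure (ℤ → A)}
  {πZ : C → ℝ≥0∞} {PZ : C → C → ℝ≥0∞} {μZ : Measure (ℤ → C)} {f : A → C}

lemma measure_window_fiber (hZ : IsStatMarkovChainZ πZ PZ μZ)
    (hf : μX.map (fun ω (n : ℤ) => f (ω n)) = μZ) (t : ℤ) {s : ℕ} (u : Fin (s + 1) → C) :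
    μX (window t s ⁻¹' {v | ∀ i, f (v i) = u i}) = pathWeight πZ PZ u := by
  have hF : Measurable fun (ω : ℤ → A) (n : ℤ) => f (ω n) :=
    measurable_pi_lambda _ fun n => (measurable_of_countable f).comp (measurable_pi_apply n)
  rw [← hZ.measure_window_singleton t u, ← hf,
    Measure.map_apply hF (measurable_window t s (measurableSet_singleton u))]
  congr 1
  ext ω
  simp [window, funext_iff]

lemma transition_eq_zero_of_lumped (hX : IsStatMarkovChainZ πX PX μX)
    (hZ : IsStatMarkovChainZ πZ PZ μZ) (hf : μX.map (fun ω (n : ℤ) => f (ω n)) = μZ)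
    {x x' : A} (hπ : πX x ≠ 0) (h : PZ (f x) (f x') = 0) : PX x x' = 0 := by
  have hle : μX (window 0 1 ⁻¹' {![x, x']})
      ≤ μX (window 0 1 ⁻¹' {v | ∀ i, f (v i) = f (![x, x'] i)}) :=
    measure_mono (Set.preimage_mono fun v hv i => by rw [Set.mem_singleton_iff.mp hv])
  rw [hX.measure_window_singleton, measure_window_fiber hZ hf] at hle
  simpa [pathWeight, h, hπ] using hle

lemma condCylZ_eq_div (hZ : IsStatMarkovChainZ πZ PZ μZ)
    (hf : μX.map (fun ω (n : ℤ) => f (ω n)) = μZ) {m : ℕ} {k l : ℤ} {a : ℤ → A}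
    (E : ℕ → Set A)
    (hE : ∀ ω : ℤ → A, (∀ i : ℤ, k ≤ i → i ≤ l → ω i = a i)
      ↔ ∀ i : Fin (2 * m + 1), window (-m) (2 * m) ω i ∈ E i) (z : ℤ → C) :
    condCylZ μX f z m k l a
      = μX (window (-m) (2 * m) ⁻¹' pathsOver f E (window (-m) (2 * m) z))
        / pathWeight πZ PZ (window (-m) (2 * m) z) := by
  rw [condCylZ, ← measure_window_fiber hZ hf (-m)]
  congr 2 <;> ext ω
  · simp only [Set.mem_ofPred_eq, Set.mem_preimage, pathsOver, hE, forall_natAbs_le_iff, window,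
      ← forall_and, and_comm]
  · simp only [Set.mem_ofPred_eq, Set.mem_preimage, forall_natAbs_le_iff, window]

end Lumped

section Integral

variable {A B C : Type*} [MeasurableSpace A] [MeasurableSpace B] [MeasurableSpace C]
  [Countable A] [Countable B] [MeasurableSingletonClass A] [MeasurableSingletonClass B]
  {πX : A → ℝ≥0∞} {PX : A → A → ℝ≥0∞} {μX : Measure (ℤ → A)}
  {πY : B → ℝ≥0∞} {PY : B → B → ℝ≥0∞} {μY : Measure (ℤ → B)}
  {πZ : C → ℝ≥0∞} {PZ : C → C → ℝ≥0∞} {μZ : Measure (ℤ → C)} {f : A → C} {g : B → C}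

theorem lintegral_condCylZ_mul_condCylZ [Countable C] [MeasurableSingletonClass C]
    (hZ : IsStatMarkovChainZ πZ PZ μZ)
    (hfX : μX.map (fun ω (n : ℤ) => f (ω n)) = μZ) (hgY : μY.map (fun ω (n : ℤ) => g (ω n)) = μZ)
    {m : ℕ} {k l : ℤ} {a : ℤ → A} {b : ℤ → B} (EX : ℕ → Set A) (EY : ℕ → Set B)
    (hEX : ∀ ω : ℤ → A, (∀ i : ℤ, k ≤ i → i ≤ l → ω i = a i)
      ↔ ∀ i : Fin (2 * m + 1), window (-m) (2 * m) ω i ∈ EX i)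
    (hEY : ∀ ω : ℤ → B, (∀ i : ℤ, k ≤ i → i ≤ l → ω i = b i)
      ↔ ∀ i : Fin (2 * m + 1), window (-m) (2 * m) ω i ∈ EY i) :
    ∫⁻ z, condCylZ μX f z m k l a * condCylZ μY g z m k l b ∂μZ
      = ∑' u, μX (window (-m) (2 * m) ⁻¹' pathsOver f EX u)
          * μY (window (-m) (2 * m) ⁻¹' pathsOver g EY u) * (pathWeight πZ PZ u)⁻¹ := by
  simp_rw [condCylZ_eq_div hZ hfX EX hEX, condCylZ_eq_div hZ hgY EY hEY]
  rw [hZ.lintegral_comp_window (-m) fun u =>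
    μX (window (-m) (2 * m) ⁻¹' pathsOver f EX u) / pathWeight πZ PZ u
      * (μY (window (-m) (2 * m) ⁻¹' pathsOver g EY u) / pathWeight πZ PZ u)]
  refine tsum_congr fun u => ENNReal.div_mul_div_mul_self ?_ (hZ.pathWeight_ne_top u)
  rw [← measure_window_fiber hZ hfX (-m)]
  exact measure_mono (Set.preimage_mono fun v hv i => (hv i).1)

theorem tsum_window_mul_eq_tsum_pathWeight (hX : IsStatMarkovChainZ πX PX μX)
    (hY : IsStatMarkovChainZ πY PY μY) (hZ : IsStatMarkovChainZ πZ PZ μZ)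
    (hc : ∀ x x', PZ (f x) (f x') = 0 → PX x x' = 0) (t : ℤ) (s : ℕ)
    (EX : ℕ → Set A) (EY : ℕ → Set B) :
    ∑' u : Fin (s + 1) → C, μX (window t s ⁻¹' pathsOver f EX u)
        * μY (window t s ⁻¹' pathsOver g EY u) * (pathWeight πZ PZ u)⁻¹
      = ∑' p, (pathsThrough (fun i => Subtype.val ⁻¹' (EX i ×ˢ EY i)) s).indicator
          (pathWeight (pairWeight f g πX πY πZ) (Rmat PX PY PZ f g)) p := by
  calc _ = ∑' u : Fin (s + 1) → C, ∑' v, ∑' w, (pathsOver f EX u).indicator (pathWeight πX PX) v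
          * ((pathsOver g EY u).indicator (pathWeight πY PY) w * (pathWeight πZ PZ u)⁻¹) := by
        refine tsum_congr fun u => ?_
        rw [hX.measure_window_preimage, hY.measure_window_preimage, mul_assoc,
          ← ENNReal.tsum_mul_right]
        refine tsum_congr fun v => ?_
        rw [← ENNReal.tsum_mul_right, ← ENNReal.tsum_mul_left]
    _ = ∑' v, ∑' w, ∑' u : Fin (s + 1) → C, (pathsOver f EX u).indicator (pathWeight πX PX) v
          * ((pathsOver g EY u).indicator (pathWeight πY PY) w * (pathWeight πZ PZ u)⁻¹) := by
        rw [ENNReal.tsum_comm]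
        exact tsum_congr fun v => ENNReal.tsum_comm
    _ = _ := by
        rw [tsum_pi_delta f g]
        refine tsum_congr fun v => tsum_congr fun w => ?_
        -- the two sides only differ in the `Decidable` instance of the `dite`
        convert tsum_indicator_pathsOver_mul_inv f g hc hZ.stat_ne_top hZ.trans_ne_top EX EY v w

end Integral

theorem statement_17_general
    {A B C : Type*} [Countable A] [Countable B] [Countable C]
    [MeasurableSpace A] [MeasurableSingletonClass A]
    [MeasurableSpace B] [MeasurableSingletonClass B]
    [MeasurableSpace C] [MeasurableSingletonClass C]
    (πX : A → ℝ≥0∞) (PX : A → A → ℝ≥0∞) (μX : Measure (ℤ → A))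
    (πY : B → ℝ≥0∞) (PY : B → B → ℝ≥0∞) (μY : Measure (ℤ → B))
    (πZ : C → ℝ≥0∞) (PZ : C → C → ℝ≥0∞) (μZ : Measure (ℤ → C))
    (f : A → C) (g : B → C)
    (hX : IsStatMarkovChainZ πX PX μX) (hY : IsStatMarkovChainZ πY PY μY)
    (hZ : IsStatMarkovChainZ πZ PZ μZ)
    (hπX : ∀ a : A, πX a ≠ 0) (hπY : ∀ b : B, πY b ≠ 0) (hπZ : ∀ c : C, πZ c ≠ 0)
    (hfX : μX.map (fun ω (n : ℤ) => f (ω n)) = μZ)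
    (hgY : μY.map (fun ω (n : ℤ) => g (ω n)) = μZ)
    (m : ℕ) (k l : ℤ) (hkl : k ≤ l) (hmk : k.natAbs ≤ m) (hml : l.natAbs ≤ m)
    (a : ℤ → A) (b : ℤ → B)
    (hΔ : ∀ i : ℤ, f (a i) = g (b i)) :
    ∫⁻ z, condCylZ μX f z m k l a * condCylZ μY g z m k l b ∂μZ
      = πX (a k) * πY (b k) / πZ (f (a k))
        * phim (Rmat (revMat πX PX) (revMat πY PY) (revMat πZ PZ) f g)
            ((m : ℤ) + k).toNat ⟨(a k, b k), hΔ k⟩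
        * phim (Rmat PX PY PZ f g) ((m : ℤ) - l).toNat ⟨(a l, b l), hΔ l⟩
        * ∏ i ∈ Finset.Icc (k + 1) l,
            Rmat PX PY PZ f g ⟨(a (i - 1), b (i - 1)), hΔ (i - 1)⟩ ⟨(a i, b i), hΔ i⟩ := by
  set K := (k + m).toNat
  set L := (l + m).toNat
  set EX : ℕ → Set A := fun i => {x | i ∈ Finset.Icc K L → x = a (-m + i)}
  set EY : ℕ → Set B := fun i => {y | i ∈ Finset.Icc K L → y = b (-m + i)}
  let pin : ℤ → Delta f g := fun i => ⟨(a i, b i), hΔ i⟩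
  have hc : ∀ x x', PZ (f x) (f x') = 0 → PX x x' = 0 :=
    fun x x' => transition_eq_zero_of_lumped hX hZ hfX (hπX x)
  have hS : (fun i : ℕ => Subtype.val ⁻¹' (EX i ×ˢ EY i))
      = fun i => {d : Delta f g | i ∈ Finset.Icc K L → d = pin (-m + i)} := by
    funext i
    ext d
    simp [EX, EY, pin, Subtype.ext_iff, Prod.ext_iff, imp_and]
  rw [lintegral_condCylZ_mul_condCylZ hZ hfX hgY EX EY (forall_Icc_iff_window a hmk hml)
      (forall_Icc_iff_window b hmk hml),
    tsum_window_mul_eq_tsum_pathWeight hX hY hZ hc,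
    tsum_indicator_pathWeight, hS,
    tsum_constrainedMass_interval _ _ (pairWeight_mul_Rmat_eq_rev f g hπX hX.stat_ne_top hπY
      hY.stat_ne_top hπZ hZ.stat_ne_top) _ (by omega : K ≤ L) (by omega : L ≤ 2 * m),
    Finset.prod_Ico_eq_prod_Icc_shift (fun i j => Rmat PX PY PZ f g (pin i) (pin j))
      (by omega : -(m : ℤ) + K = k) (by omega : -(m : ℤ) + L = l)]
  rw [show pin (-m + K) = pin k from congrArg pin (by omega),
    show pin (-m + L) = pin l from congrArg pin (by omega),
    show ((m : ℤ) + k).toNat = K by omega, show ((m : ℤ) - l).toNat = 2 * m - L by omega]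
  simp only [pairWeight, pin]
  ring

/-- **Joint distribution of `W^{-m,m}_k, …, W^{-m,m}_l` when `m ≥ max(|k|,|l|)`.** The coupling
`W^{-m,m}` is obtained by conditioning the two-sided chains `X̄` and `Ȳ`, conditionally
independently given `Z`, on agreeing with `Z` under `f`, `g` on the window `[-m,m]`.  Its
cylinder probability `P(W^{-m,m}_k = (a_k,b_k), …, W^{-m,m}_l = (a_l,b_l))`, which by
construction equals the `μ_Z`-expectation of the product of conditional probabilities, equals
`(π_X(a_k) π_Y(b_k) / π_Z(c_k)) * φ^rev_{m+k}(a_k,b_k) * φ_{m-l}(a_l,b_l)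
  * Π_{i=k+1}^{l} R((a_{i-1},b_{i-1}),(a_i,b_i))`. -/
theorem statement_17
    {A B C : Type*} [Countable A] [Countable B] [Countable C]
    [MeasurableSpace A] [MeasurableSingletonClass A]
    [MeasurableSpace B] [MeasurableSingletonClass B]
    [MeasurableSpace C] [MeasurableSingletonClass C]
    (πX : A → ℝ≥0∞) (PX : A → A → ℝ≥0∞) (μX : Measure (ℤ → A))
    (πY : B → ℝ≥0∞) (PY : B → B → ℝ≥0∞) (μY : Measure (ℤ → B))
    (πZ : C → ℝ≥0∞) (PZ : C → C → ℝ≥0∞) (μZ : Measure (ℤ → C))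
    (f : A → C) (g : B → C)
    (hX : IsStatMarkovChainZ πX PX μX) (hY : IsStatMarkovChainZ πY PY μY)
    (hZ : IsStatMarkovChainZ πZ PZ μZ)
    (hπX : ∀ a : A, πX a ≠ 0) (hπY : ∀ b : B, πY b ≠ 0) (hπZ : ∀ c : C, πZ c ≠ 0)
    (hfX : μX.map (fun ω (n : ℤ) => f (ω n)) = μZ)
    (hgY : μY.map (fun ω (n : ℤ) => g (ω n)) = μZ)
    (m : ℕ) (k l : ℤ) (hkl : k ≤ l) (hmk : k.natAbs ≤ m) (hml : l.natAbs ≤ m)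
    (a : ℤ → A) (b : ℤ → B)
    (hΔ : ∀ i : ℤ, f (a i) = g (b i))
    (hpos : μZ {ω | ∀ i : ℤ, k ≤ i → i ≤ l → ω i = f (a i)} ≠ 0) :
    ∫⁻ z, condCylZ μX f z m k l a * condCylZ μY g z m k l b ∂μZ
      = πX (a k) * πY (b k) / πZ (f (a k))
        * phim (Rmat (revMat πX PX) (revMat πY PY) (revMat πZ PZ) f g)
            ((m : ℤ) + k).toNat ⟨(a k, b k), hΔ k⟩
        * phim (Rmat PX PY PZ f g) ((m : ℤ) - l).toNat ⟨(a l, b l), hΔ l⟩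
        * ∏ i ∈ Finset.Icc (k + 1) l,
            Rmat PX PY PZ f g ⟨(a (i - 1), b (i - 1)), hΔ (i - 1)⟩ ⟨(a i, b i), hΔ i⟩ :=
  statement_17_general πX PX μX πY PY μY πZ PZ μZ f g hX hY hZ hπX hπY hπZ hfX hgY m k l hkl hmk hml
    a b hΔ
end
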